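/- arXiv:1905.08057 — 8 statements merged into one kernel-verified Lean document; each statement's English description precedes it below -/
import Mathlib

section
/- Let X be a finite-dimensional complex inner product space, W a complex subspace with orthogonal projection P onto W, and v ∈ X nonzero. Then the ratio of the 2-dimensional Lebesgue measure of the orthogonal projection of the square [v, iv] ⊂ ℂv onto W to the measure of [v, iv] equals ‖Pv‖²/‖v‖². -/
open MeasureTheory Set
open scoped NNReal ENNReal Pointwise

namespace Stmt0Aux

/-- The unit square in `ℂ`. -/
def Q : Set ℂ := {z | ∃ s t : ℝ, s ∈ Set.Icc (0:ℝ) 1 ∧ t ∈ Set.Icc (0:ℝ) 1 ∧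
  z = (s : ℂ) + (t : ℂ) * Complex.I}

lemma Q_eq_image : Q = (fun p : ℝ × ℝ => (p.1 : ℂ) + (p.2 : ℂ) * Complex.I) ''
    (Set.Icc (0:ℝ) 1 ×ˢ Set.Icc (0:ℝ) 1) := by
  ext z
  constructor
  · rintro ⟨s, t, hs, ht, rfl⟩
    exact ⟨(s, t), ⟨hs, ht⟩, rfl⟩
  · rintro ⟨⟨s, t⟩, ⟨hs, ht⟩, rfl⟩
    exact ⟨s, t, hs, ht, rfl⟩

lemma Q_compact : IsCompact Q := by
  rw [Q_eq_image]
  exact ((isCompact_Icc.prod isCompact_Icc)).image (by continuity)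

lemma Q_subset : {z : ℂ | z.re ∈ Set.Ioo (0:ℝ) 1 ∧ z.im ∈ Set.Ioo (0:ℝ) 1} ⊆ Q := by
  rintro z ⟨h1, h2⟩
  refine ⟨z.re, z.im, Ioo_subset_Icc_self h1, Ioo_subset_Icc_self h2, ?_⟩
  simp [Complex.ext_iff]

lemma haar_Q : (μH[2] : Measure ℂ) = μH[(Module.finrank ℝ ℂ : ℝ)] := by
  rw [Complex.finrank_real_complex]; norm_num

lemma Q_pos : 0 < μH[2] Q := by
  rw [haar_Q]
  haveI : (μH[(Module.finrank ℝ ℂ : ℝ)] : Measure ℂ).IsAddHaarMeasure :=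
    isAddHaarMeasure_hausdorffMeasure
  refine lt_of_lt_of_le ?_ (measure_mono Q_subset)
  have hopen : IsOpen {z : ℂ | z.re ∈ Set.Ioo (0:ℝ) 1 ∧ z.im ∈ Set.Ioo (0:ℝ) 1} :=
    (isOpen_Ioo.preimage Complex.continuous_re).inter
      (isOpen_Ioo.preimage Complex.continuous_im)
  refine hopen.measure_pos _ ⟨(1/2 : ℝ) + (1/2 : ℝ) * Complex.I, ?_⟩
  constructor <;> simp <;> norm_num

lemma Q_lt_top : μH[2] Q < ⊤ := by
  rw [haar_Q]
  haveI : (μH[(Module.finrank ℝ ℂ : ℝ)] : Measure ℂ).IsAddHaarMeasure :=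
    isAddHaarMeasure_hausdorffMeasure
  exact Q_compact.measure_lt_top

section Para
variable {X : Type*} [NormedAddCommGroup X] [InnerProductSpace ℂ X]
  [MeasurableSpace X] [BorelSpace X]

lemma para_eq (u : X) :
    {x | ∃ s t : ℝ, s ∈ Set.Icc (0:ℝ) 1 ∧ t ∈ Set.Icc (0:ℝ) 1 ∧
      x = s • u + t • (Complex.I • u)} = (fun z : ℂ => z • u) '' Q := by
  have key : ∀ (s t : ℝ), ((s : ℂ) + (t : ℂ) * Complex.I) • u
      = s • u + t • (Complex.I • u) := by
    intro s t
    rw [add_smul, mul_smul]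
    norm_num [Complex.coe_smul]
  ext x
  constructor
  · rintro ⟨s, t, hs, ht, rfl⟩
    exact ⟨(s : ℂ) + (t : ℂ) * Complex.I, ⟨s, t, hs, ht, rfl⟩, by simpa using key s t⟩
  · rintro ⟨z, ⟨s, t, hs, ht, rfl⟩, rfl⟩
    exact ⟨s, t, hs, ht, by simpa using (key s t)⟩

lemma para_measure (u : X) (hu : u ≠ 0) :
    μH[2] ((fun z : ℂ => z • u) '' Q) = (‖u‖₊ ^ (2:ℝ) : ℝ≥0) • μH[2] Q := by
  have hn : ‖u‖ ≠ 0 := norm_ne_zero_iff.mpr hu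
  set L := LinearMap.toSpanSingleton ℂ X ((‖u‖ : ℝ)⁻¹ • u) with hL
  have iso : Isometry L := by
    refine AddMonoidHomClass.isometry_of_norm _ fun z => ?_
    rw [hL, LinearMap.toSpanSingleton_apply, norm_smul, norm_smul, norm_inv, norm_norm,
      inv_mul_cancel₀ hn, mul_one]
  have himg : (fun z : ℂ => z • u) '' Q = L '' (((‖u‖ : ℂ)) • Q) := by
    rw [← Set.image_smul, Set.image_image]
    apply Set.image_congr
    intro z _
    symm
    rw [hL, LinearMap.toSpanSingleton_apply, smul_eq_mul, mul_smul, Complex.coe_smul,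
      smul_comm (‖u‖ : ℝ) z, smul_smul (‖u‖ : ℝ), mul_inv_cancel₀ hn, one_smul]
  rw [himg, iso.hausdorffMeasure_image (Or.inl (by norm_num)),
    Measure.hausdorffMeasure_smul₀ (by norm_num) (by exact_mod_cast hn) Q]
  norm_num

end Para

end Stmt0Aux

open Stmt0Aux in
/-- complex Pythagorean projection factor for the square [v, iv]. -/
theorem stmt_0 {X : Type*} [NormedAddCommGroup X] [InnerProductSpace ℂ X]
    [FiniteDimensional ℂ X] [MeasurableSpace X] [BorelSpace X]
    (W : Submodule ℂ X) (v : X) (hv : v ≠ 0) :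
    μH[2] ((fun x => (W.orthogonalProjection x : X)) ''
        {x | ∃ s t : ℝ, s ∈ Set.Icc (0:ℝ) 1 ∧ t ∈ Set.Icc (0:ℝ) 1 ∧
          x = s • v + t • (Complex.I • v)}) /
      μH[2] {x | ∃ s t : ℝ, s ∈ Set.Icc (0:ℝ) 1 ∧ t ∈ Set.Icc (0:ℝ) 1 ∧
          x = s • v + t • (Complex.I • v)} =
    ENNReal.ofReal (‖(W.orthogonalProjection v : X)‖ ^ 2 / ‖v‖ ^ 2) := by
  set w : X := (W.orthogonalProjection v : X) with hwdef
  have himg : (fun x => (W.orthogonalProjection x : X)) ''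
      {x | ∃ s t : ℝ, s ∈ Set.Icc (0:ℝ) 1 ∧ t ∈ Set.Icc (0:ℝ) 1 ∧
        x = s • v + t • (Complex.I • v)} = (fun z : ℂ => z • w) '' Q := by
    rw [para_eq v, Set.image_image]
    apply Set.image_congr
    intro z _
    rw [hwdef, _root_.map_smul]
    rfl
  rw [himg, para_eq v, para_measure v hv]
  by_cases hw : w = 0
  · have hsub : (fun z : ℂ => z • w) '' Q ⊆ {0} := by
      rintro x ⟨z, _, rfl⟩
      simp [hw]
    have h0 : μH[2] ((fun z : ℂ => z • w) '' Q) = 0 := by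
      haveI : NullSingletonClass (μH[(2:ℝ)] : Measure X) := Measure.noAtoms_hausdorff X (by norm_num)
      exact le_antisymm ((measure_mono hsub).trans_eq (measure_singleton (μ := (μH[(2:ℝ)] : Measure X)) 0)) zero_le
    rw [h0, ENNReal.zero_div, hw]
    simp
  · rw [para_measure w hw]
    simp only [ENNReal.smul_def, smul_eq_mul]
    rw [ENNReal.mul_div_mul_right _ _ Q_pos.ne' Q_lt_top.ne,
      ENNReal.ofReal_div_of_pos (pow_pos (norm_pos_iff.mpr hv) 2)]
    congr 1
    · rw [ENNReal.ofReal_pow (norm_nonneg w), show (2:ℝ) = ((2:ℕ):ℝ) by norm_num,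
        NNReal.rpow_natCast]
      push_cast
      rw [ofReal_norm, enorm_eq_nnnorm]
    · rw [ENNReal.ofReal_pow (norm_nonneg v), show (2:ℝ) = ((2:ℕ):ℝ) by norm_num,
        NNReal.rpow_natCast]
      push_cast
      rw [ofReal_norm, enorm_eq_nnnorm]
end

section
/- Let X be a finite-dimensional complex inner product space with an orthogonal decomposition X = V₁ ⊕ ⋯ ⊕ V_k into complex subspaces, L = ℂv a complex line, and S ⊂ L a Lebesgue measurable set (under the identification of L with ℝ²). Let S_j = P_j(S) be its orthogonal projection onto V_j. Then the 2-dimensional Lebesgue measure satisfies |S|₂ = ∑_{j=1}^k |S_j|₂ (complex Pythagorean theorem for lines). -/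
open MeasureTheory
open scoped NNReal ENNReal

/-- complex Pythagorean theorem for lines: for an orthogonal
decomposition X = V₁ ⊕ ⋯ ⊕ V_k into complex subspaces and a measurable set S
in a complex line L = ℂv, the 2-dimensional measure of S is the sum of the
2-dimensional measures of its orthogonal projections onto the V_j. -/
theorem stmt_6 {X : Type*} [NormedAddCommGroup X] [InnerProductSpace ℂ X]
    [FiniteDimensional ℂ X] [MeasurableSpace X] [BorelSpace X]
    (k : ℕ) (V : Fin k → Submodule ℂ X)
    (horth : ∀ i j, i ≠ j → V i ≤ (V j)ᗮ)
    (hsum : (⨆ j, V j) = ⊤)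
    (v : X) (hv : v ≠ 0)
    (S : Set X) (hSsub : S ⊆ (ℂ ∙ v : Submodule ℂ X)) (hSmeas : MeasurableSet S) :
    μH[2] S = ∑ j, μH[2] ((fun x => (Submodule.orthogonalProjection (V j) x : X)) '' S) := by
  classical
  have hortho : OrthogonalFamily ℂ (fun i => V i) (fun i => (V i).subtypeₗᵢ) := by
    intro i j hij x y
    have hx : (x : X) ∈ (V j)ᗮ := horth i j hij x.2
    exact (Submodule.mem_orthogonal' _ _).1 hx y y.2
  have hsum' : (∑ i, (Submodule.orthogonalProjection (V i) v : X)) = v :=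
    hortho.sum_projection_of_mem_iSup v (by rw [hsum]; exact Submodule.mem_top)
  have hpyth : ∑ i, ‖(Submodule.orthogonalProjection (V i) v : X)‖ ^ 2 = ‖v‖ ^ 2 := by
    have h := hortho.norm_sum (fun i => Submodule.orthogonalProjection (V i) v) Finset.univ
    simp only [Submodule.coe_subtypeₗᵢ, Submodule.coe_subtype] at h
    rw [hsum'] at h
    exact h.symm
  have hv' : ‖v‖₊ ≠ 0 := by simpa using hv
  have hS' : ∀ x ∈ S, ∃ a : ℂ, a • v = x := fun x hx =>
    Submodule.mem_span_singleton.1 (hSsub hx)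
  have key : ∀ j, μH[2] ((fun x => (Submodule.orthogonalProjection (V j) x : X)) '' S)
      = ((‖(Submodule.orthogonalProjection (V j) v : X)‖₊ * ‖v‖₊⁻¹ : ℝ≥0) : ℝ≥0∞) ^ (2 : ℝ)
          * μH[2] S := by
    intro j
    set w : X := (Submodule.orthogonalProjection (V j) v : X) with hw
    set r : ℝ≥0 := ‖w‖₊ * ‖v‖₊⁻¹ with hr
    have hproj : ∀ a : ℂ, (Submodule.orthogonalProjection (V j) (a • v) : X) = a • w := by
      intro a; rw [_root_.map_smul]; rfl
    have hlip : LipschitzOnWith r (fun x => (Submodule.orthogonalProjection (V j) x : X)) S := by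
      intro x hx y hy
      obtain ⟨a, rfl⟩ := hS' x hx
      obtain ⟨b, rfl⟩ := hS' y hy
      simp only [hproj]
      rw [edist_eq_enorm_sub, enorm_eq_nnnorm, edist_eq_enorm_sub, enorm_eq_nnnorm, ← sub_smul, ← sub_smul,
        nnnorm_smul, nnnorm_smul, ← ENNReal.coe_mul, ENNReal.coe_le_coe]
      have : r * (‖a - b‖₊ * ‖v‖₊) = ‖a - b‖₊ * ‖w‖₊ := by
        rw [hr]; field_simp
      rw [this]
    refine le_antisymm (hlip.hausdorffMeasure_image_le (by norm_num)) ?_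
    by_cases hw0 : w = 0
    · have hr0 : r = 0 := by simp [hr, hw0]
      rw [hr0]
      simp [ENNReal.zero_rpow_of_pos (by norm_num : (0:ℝ) < 2)]
    · have hw' : ‖w‖₊ ≠ 0 := by simpa using hw0
      set g : X → X := fun y => (((inner ℂ w y : ℂ)) / ((inner ℂ w w : ℂ))) • v with hg
      have hgw : ∀ a : ℂ, g (a • w) = a • v := by
        intro a
        simp only [hg, inner_smul_right]
        rw [mul_div_assoc, div_self (inner_self_ne_zero.2 hw0), mul_one]
      have hlip2 : LipschitzOnWith (‖v‖₊ * ‖w‖₊⁻¹) g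
          ((fun x => (Submodule.orthogonalProjection (V j) x : X)) '' S) := by
        rintro y ⟨x, hx, rfl⟩ y' ⟨x', hx', rfl⟩
        obtain ⟨a, rfl⟩ := hS' x hx
        obtain ⟨b, rfl⟩ := hS' x' hx'
        simp only [hproj, hgw]
        rw [edist_eq_enorm_sub, enorm_eq_nnnorm, edist_eq_enorm_sub, enorm_eq_nnnorm, ← sub_smul, ← sub_smul,
          nnnorm_smul, nnnorm_smul, ← ENNReal.coe_mul, ENNReal.coe_le_coe]
        have : (‖v‖₊ * ‖w‖₊⁻¹) * (‖a - b‖₊ * ‖w‖₊) = ‖a - b‖₊ * ‖v‖₊ := by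
          field_simp
        rw [this]
      have hsub : S ⊆ g '' ((fun x => (Submodule.orthogonalProjection (V j) x : X)) '' S) := by
        intro x hx
        obtain ⟨a, ha⟩ := hS' x hx
        exact ⟨_, Set.mem_image_of_mem _ hx, by rw [← ha, hproj, hgw]⟩
      have h2 : μH[2] S ≤ ((‖v‖₊ * ‖w‖₊⁻¹ : ℝ≥0) : ℝ≥0∞) ^ (2 : ℝ)
          * μH[2] ((fun x => (Submodule.orthogonalProjection (V j) x : X)) '' S) :=
        le_trans (measure_mono hsub) (hlip2.hausdorffMeasure_image_le (by norm_num))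
      calc ((r : ℝ≥0∞)) ^ (2 : ℝ) * μH[2] S
          ≤ ((r : ℝ≥0∞)) ^ (2 : ℝ) * (((‖v‖₊ * ‖w‖₊⁻¹ : ℝ≥0) : ℝ≥0∞) ^ (2 : ℝ)
            * μH[2] ((fun x => (Submodule.orthogonalProjection (V j) x : X)) '' S)) :=
            mul_le_mul_right h2 _
        _ = ((r * (‖v‖₊ * ‖w‖₊⁻¹) : ℝ≥0) : ℝ≥0∞) ^ (2 : ℝ)
            * μH[2] ((fun x => (Submodule.orthogonalProjection (V j) x : X)) '' S) := by
            simp_rw [ENNReal.rpow_two]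
            push_cast [ENNReal.coe_inv hv', ENNReal.coe_inv hw', hr]
            ring
        _ = μH[2] ((fun x => (Submodule.orthogonalProjection (V j) x : X)) '' S) := by
            have : r * (‖v‖₊ * ‖w‖₊⁻¹) = 1 := by
              rw [hr]; field_simp
            rw [this]; simp
  simp_rw [key, ← Finset.sum_mul]
  have hone : ∑ j, ((‖(Submodule.orthogonalProjection (V j) v : X)‖₊ * ‖v‖₊⁻¹ : ℝ≥0) : ℝ≥0∞) ^ (2 : ℝ)
      = 1 := by
    simp_rw [ENNReal.rpow_two, ← ENNReal.coe_pow, ← ENNReal.coe_finset_sum]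
    norm_cast
    rw [← NNReal.coe_inj]
    push_cast
    simp_rw [mul_pow]
    rw [← Finset.sum_mul, hpyth]
    field_simp
  rw [hone, one_mul]
end

section
/- Let V, W be p-dimensional complex subspaces of a finite-dimensional complex inner product space X, with orthonormal bases (e₁,…,e_p) of V and (f₁,…,f_p) of W, and B the complex p×p matrix B_{ij} = ⟨f_i, e_j⟩. Then the factor by which 2p-dimensional real Lebesgue measure in V contracts under orthogonal projection onto W equals |det B|². -/
open MeasureTheory


lemma aux_det_fromBlocks_normSq {n : Type*} [Fintype n] [DecidableEq n] (B : Matrix n n ℂ) :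
    (Matrix.fromBlocks (B.map Complex.re) (-(B.map Complex.im))
      (B.map Complex.im) (B.map Complex.re)).det = Complex.normSq B.det := by
  apply Complex.ofReal_injective
  rw [show ((Matrix.fromBlocks (B.map Complex.re) (-(B.map Complex.im))
      (B.map Complex.im) (B.map Complex.re)).det : ℂ)
    = Complex.ofRealHom ((Matrix.fromBlocks (B.map Complex.re) (-(B.map Complex.im))
      (B.map Complex.im) (B.map Complex.re)).det) from rfl, RingHom.map_det]
  set A : Matrix n n ℂ := B.map (fun z => (z.re : ℂ)) with hA
  set C : Matrix n n ℂ := B.map (fun z => (z.im : ℂ)) with hC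
  have hmap : (Complex.ofRealHom.mapMatrix (Matrix.fromBlocks (B.map Complex.re)
      (-(B.map Complex.im)) (B.map Complex.im) (B.map Complex.re)))
      = Matrix.fromBlocks A (-C) C A := by
    ext (i|i) (j|j) <;> simp [A, C, Matrix.fromBlocks]
  rw [hmap]
  set S : Matrix (n ⊕ n) (n ⊕ n) ℂ :=
    Matrix.fromBlocks 1 1 (Complex.I • 1) (-(Complex.I • 1)) with hS
  set D : Matrix (n ⊕ n) (n ⊕ n) ℂ :=
    Matrix.fromBlocks (A - Complex.I • C) 0 0 (A + Complex.I • C) with hD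
  have key : Matrix.fromBlocks A (-C) C A * S = S * D := by
    rw [hS, hD, Matrix.fromBlocks_multiply, Matrix.fromBlocks_multiply]
    rw [Matrix.fromBlocks_inj]
    refine ⟨?_, ?_, ?_, ?_⟩ <;>
      simp [Matrix.mul_smul, smul_sub, smul_add, smul_smul, Complex.I_mul_I,
        sub_eq_add_neg, add_comm, neg_add]
  have hSdet : S.det ≠ 0 := by
    haveI : Invertible (1 : Matrix n n ℂ) := invertibleOne
    have h : S.det = (1 : Matrix n n ℂ).det *
        ((-(Complex.I • 1) : Matrix n n ℂ) - (Complex.I • 1) * ⅟(1 : Matrix n n ℂ) * 1).det := by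
      rw [hS]; exact Matrix.det_fromBlocks₁₁ 1 1 (Complex.I • 1) (-(Complex.I • 1))
    rw [h]
    simp only [Matrix.det_one, one_mul, Matrix.mul_one, invOf_one]
    rw [show (-(Complex.I • 1) - Complex.I • (1 : Matrix n n ℂ))
        = (-(2*Complex.I)) • (1 : Matrix n n ℂ) by module]
    rw [Matrix.det_smul, Matrix.det_one, mul_one]
    apply pow_ne_zero
    simp [Complex.I_ne_zero]
  have hdets : (Matrix.fromBlocks A (-C) C A).det * S.det = D.det * S.det := by
    rw [← Matrix.det_mul, key, Matrix.det_mul, mul_comm]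
  have hMD := mul_right_cancel₀ hSdet hdets
  rw [hMD, hD, Matrix.det_fromBlocks_zero₁₂]
  have h1 : A + Complex.I • C = B := by
    ext i j
    simp only [Matrix.add_apply, Matrix.smul_apply, Matrix.map_apply, smul_eq_mul, A, C]
    rw [mul_comm, Complex.re_add_im]
  have h2 : A - Complex.I • C = B.map (starRingEnd ℂ) := by
    ext i j
    simp only [Matrix.sub_apply, Matrix.map_apply, Matrix.smul_apply, smul_eq_mul, A, C]
    rw [show ((starRingEnd ℂ) (B i j)) = Complex.ofReal (B i j).re
        - Complex.I * Complex.ofReal (B i j).im by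
      apply Complex.ext <;> simp]
  have h3 : (B.map (starRingEnd ℂ)).det = (starRingEnd ℂ) B.det := by
    rw [RingHom.map_det, RingHom.mapMatrix_apply]
  rw [h1, h2, h3, mul_comm, Complex.mul_conj]

lemma aux_det_restrictScalars {E : Type*} [AddCommGroup E] [Module ℂ E] [Module ℝ E]
    [IsScalarTower ℝ ℂ E] {n : ℕ} (b : Module.Basis (Fin n) ℂ E) (M : E →ₗ[ℂ] E) :
    LinearMap.det (M.restrictScalars ℝ) = Complex.normSq (LinearMap.det M) := by
  classical
  set d : Module.Basis (Fin 2 × Fin n) ℝ E := Complex.basisOneI.smulTower b with hd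
  set B : Matrix (Fin n) (Fin n) ℂ := LinearMap.toMatrix b b M with hB
  set σ : (Fin n ⊕ Fin n) ≃ (Fin 2 × Fin n) :=
    { toFun := Sum.elim (fun i => ((0 : Fin 2), i)) (fun i => ((1 : Fin 2), i))
      invFun := fun q => if q.1 = 0 then Sum.inl q.2 else Sum.inr q.2
      left_inv := by rintro (i|i) <;> simp
      right_inv := by rintro ⟨k, i⟩; fin_cases k <;> simp } with hσ
  have hentry : ∀ k i l j, LinearMap.toMatrix d d (M.restrictScalars ℝ) (k, i) (l, j)
      = Complex.basisOneI.repr ((Complex.basisOneI l) * B i j) k := by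
    intro k i l j
    rw [LinearMap.toMatrix_apply, hd, Module.Basis.smulTower_repr, Module.Basis.smulTower_apply]
    simp only [LinearMap.restrictScalars_apply, _root_.map_smul, Finsupp.smul_apply, smul_eq_mul]
    simp [hB, LinearMap.toMatrix_apply]
  have hsub : (LinearMap.toMatrix d d (M.restrictScalars ℝ)).submatrix σ σ
      = Matrix.fromBlocks (B.map Complex.re) (-(B.map Complex.im))
        (B.map Complex.im) (B.map Complex.re) := by
    ext (i|i) (j|j) <;>
      simp [Matrix.submatrix_apply, hσ, hentry, Complex.coe_basisOneI_repr,
        Complex.coe_basisOneI, Matrix.fromBlocks]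
  rw [← LinearMap.det_toMatrix d, ← Matrix.det_submatrix_equiv_self σ, hsub,
    aux_det_fromBlocks_normSq, hB, LinearMap.det_toMatrix]

/-- for p-dimensional complex subspaces V, W of a
finite-dimensional complex inner product space with orthonormal bases (e_i) of
V and (f_i) of W, the 2p-dimensional real measure contraction factor of the
orthogonal projection onto W equals |det B|² for B_{ij} = ⟨f_i, e_j⟩. -/
theorem stmt_10 {X : Type*} [NormedAddCommGroup X] [InnerProductSpace ℂ X]
    [FiniteDimensional ℂ X] [MeasurableSpace X] [BorelSpace X]
    (p : ℕ) (V W : Submodule ℂ X)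
    (hV : Module.finrank ℂ V = p) (hW : Module.finrank ℂ W = p)
    (e f : Fin p → X) (he : Orthonormal ℂ e) (hf : Orthonormal ℂ f)
    (heV : Submodule.span ℂ (Set.range e) = V)
    (hfW : Submodule.span ℂ (Set.range f) = W)
    (S : Set X) (hSsub : S ⊆ (V : Set X)) (hSmeas : MeasurableSet S)
    (hS0 : μH[(2 * p : ℝ)] S ≠ 0) (hStop : μH[(2 * p : ℝ)] S ≠ ⊤) :
    μH[(2 * p : ℝ)] ((fun x => (Submodule.orthogonalProjection W x : X)) '' S) /
        μH[(2 * p : ℝ)] S =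
      ENNReal.ofReal (‖(Matrix.of fun i j => (inner ℂ (f i) (e j) : ℂ)).det‖ ^ 2) := by
  classical
  letI : MeasurableSpace (EuclideanSpace ℂ (Fin p)) := borel _
  haveI : BorelSpace (EuclideanSpace ℂ (Fin p)) := ⟨rfl⟩
  -- orthonormal bases of V and W
  have hmemV : ∀ i, e i ∈ V := fun i => heV ▸ Submodule.subset_span (Set.mem_range_self i)
  have hmemW : ∀ i, f i ∈ W := fun i => hfW ▸ Submodule.subset_span (Set.mem_range_self i)
  set e' : Fin p → V := fun i => ⟨e i, hmemV i⟩ with he'def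
  set f' : Fin p → W := fun i => ⟨f i, hmemW i⟩ with hf'def
  have he' : Orthonormal ℂ e' := by
    rw [orthonormal_iff_ite] at he ⊢
    intro i j; rw [Submodule.coe_inner]; exact he i j
  have hf' : Orthonormal ℂ f' := by
    rw [orthonormal_iff_ite] at hf ⊢
    intro i j; rw [Submodule.coe_inner]; exact hf i j
  have hspanV : ⊤ ≤ Submodule.span ℂ (Set.range e') := by
    have hmap : Submodule.map V.subtype (Submodule.span ℂ (Set.range e'))
        = Submodule.map V.subtype ⊤ := by
      rw [Submodule.map_span, Submodule.map_subtype_top, ← Set.range_comp]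
      exact heV
    exact (Submodule.map_injective_of_injective V.injective_subtype hmap).ge
  have hspanW : ⊤ ≤ Submodule.span ℂ (Set.range f') := by
    have hmap : Submodule.map W.subtype (Submodule.span ℂ (Set.range f'))
        = Submodule.map W.subtype ⊤ := by
      rw [Submodule.map_span, Submodule.map_subtype_top, ← Set.range_comp]
      exact hfW
    exact (Submodule.map_injective_of_injective W.injective_subtype hmap).ge
  set bV : OrthonormalBasis (Fin p) ℂ V := OrthonormalBasis.mk he' hspanV with hbV
  set bW : OrthonormalBasis (Fin p) ℂ W := OrthonormalBasis.mk hf' hspanW with hbW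
  set φ : EuclideanSpace ℂ (Fin p) →ₗᵢ[ℂ] X := V.subtypeₗᵢ.comp bV.repr.symm.toLinearIsometry with hφ
  set ψ : EuclideanSpace ℂ (Fin p) →ₗᵢ[ℂ] X := W.subtypeₗᵢ.comp bW.repr.symm.toLinearIsometry with hψ
  have hφapp : ∀ v : EuclideanSpace ℂ (Fin p), φ v = ((bV.repr.symm v : V) : X) := fun v => rfl
  have hψapp : ∀ v : EuclideanSpace ℂ (Fin p), ψ v = ((bW.repr.symm v : W) : X) := fun v => rfl
  have hrange : Set.range ⇑φ = (V : Set X) := by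
    ext x
    constructor
    · rintro ⟨a, rfl⟩; exact (bV.repr.symm a).2
    · intro hx; exact ⟨bV.repr ⟨x, hx⟩, by simp [hφapp]⟩
  set A : Set (EuclideanSpace ℂ (Fin p)) := ⇑φ ⁻¹' S with hAdef
  have hSA : ⇑φ '' A = S := Set.image_preimage_eq_of_subset (by rw [hrange]; exact hSsub)
  have hd : (0 : ℝ) ≤ 2 * p := by positivity
  -- the linear map T
  set T : EuclideanSpace ℂ (Fin p) →ₗ[ℂ] EuclideanSpace ℂ (Fin p) := bW.repr.toLinearEquiv.toLinearMap ∘ₗ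
    ((Submodule.orthogonalProjection W).toLinearMap ∘ₗ φ.toLinearMap) with hT
  have himg : ((fun x => (Submodule.orthogonalProjection W x : X)) '' S) = ⇑ψ '' (⇑T '' A) := by
    rw [← hSA, ← Set.image_comp, ← Set.image_comp]
    apply Set.image_congr
    intro a _
    simp [hT, hψapp]
  -- measure identities
  have hmS : μH[(2 * p : ℝ)] S = μH[(2 * p : ℝ)] A := by
    rw [← hSA, φ.isometry.hausdorffMeasure_image (Or.inl hd)]
  have hmP : μH[(2 * p : ℝ)] ((fun x => (Submodule.orthogonalProjection W x : X)) '' S)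
      = μH[(2 * p : ℝ)] (⇑T '' A) := by
    rw [himg, ψ.isometry.hausdorffMeasure_image (Or.inl hd)]
  -- Haar measure argument on E
  have hfr : (2 * (p : ℝ)) = ((Module.finrank ℝ (EuclideanSpace ℂ (Fin p)) : ℕ) : ℝ) := by
    have : Module.finrank ℝ (EuclideanSpace ℂ (Fin p)) = 2 * p := by
      rw [← Module.finrank_mul_finrank ℝ ℂ (EuclideanSpace ℂ (Fin p)), Complex.finrank_real_complex,
        finrank_euclideanSpace, Fintype.card_fin]
    rw [this]; push_cast; ring
  haveI hHaar : Measure.IsAddHaarMeasure (μH[(2 * p : ℝ)] : Measure (EuclideanSpace ℂ (Fin p))) := by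
    rw [hfr]; exact isAddHaarMeasure_hausdorffMeasure
  have haar := Measure.addHaar_image_linearMap (μH[(2 * p : ℝ)] : Measure (EuclideanSpace ℂ (Fin p)))
    (T.restrictScalars ℝ) A
  have hcoe : ⇑(T.restrictScalars ℝ) = ⇑T := rfl
  rw [hcoe] at haar
  -- determinant computation
  have hdet : LinearMap.det T = (Matrix.of fun i j => (inner ℂ (f i) (e j) : ℂ)).det := by
    have hφe : ∀ j, φ (EuclideanSpace.single j 1) = e j := by
      intro j
      rw [hφapp, OrthonormalBasis.repr_symm_single]
      show ((OrthonormalBasis.mk he' hspanV j : V) : X) = e j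
      rw [OrthonormalBasis.coe_mk]
    have hbWi : ∀ i, bW i = f' i := fun i => congr_fun (OrthonormalBasis.coe_mk hf' hspanW) i
    rw [← LinearMap.det_toMatrix ((EuclideanSpace.basisFun (Fin p) ℂ).toBasis) T]
    congr 1
    ext i j
    rw [LinearMap.toMatrix_apply, OrthonormalBasis.coe_toBasis_repr_apply,
      EuclideanSpace.basisFun_repr]
    have hcj : (EuclideanSpace.basisFun (Fin p) ℂ).toBasis j = EuclideanSpace.single j 1 := by
      rw [OrthonormalBasis.coe_toBasis, EuclideanSpace.basisFun_apply]
    rw [hcj]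
    show (bW.repr (Submodule.orthogonalProjection W (φ (EuclideanSpace.single j 1)))) i = _
    rw [hφe j, OrthonormalBasis.repr_apply_apply, hbWi i, Matrix.of_apply]
    exact Submodule.inner_orthogonalProjection_eq_of_mem_left (K := W) (f' i) (e j)
  have hdetR : LinearMap.det (T.restrictScalars ℝ)
      = ‖(Matrix.of fun i j => (inner ℂ (f i) (e j) : ℂ)).det‖ ^ 2 := by
    rw [aux_det_restrictScalars ((EuclideanSpace.basisFun (Fin p) ℂ).toBasis) T, hdet,
      ← Complex.sq_norm]
  -- conclude
  rw [hmP, hmS, haar, hdetR, abs_of_nonneg (by positivity), mul_div_assoc,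
    ENNReal.div_self (hmS ▸ hS0) (hmS ▸ hStop), mul_one]
end

section
/- Let V, W be subspaces of a finite-dimensional real inner product space with dim V = p ≤ dim W = q, with bases (v₁,…,v_p) of V and (w₁,…,w_q) of W. Setting A = (⟨w_i,w_j⟩), B = (⟨w_i,v_j⟩), D = (⟨v_i,v_j⟩), the projection factor of V onto W equals √(det(Bᵀ A⁻¹ B)/det D). -/
open MeasureTheory Matrix
open scoped RealInnerProductSpace

noncomputable section Aux11

variable {E F : Type*} [NormedAddCommGroup E] [InnerProductSpace ℝ E]
  [NormedAddCommGroup F] [InnerProductSpace ℝ F]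

/-- Gram matrix of a finite family of vectors. -/
def gram11 {n : ℕ} (u : Fin n → E) : Matrix (Fin n) (Fin n) ℝ :=
  Matrix.of fun i j => ⟪u i, u j⟫

lemma gram11_mulVec {n : ℕ} (u : Fin n → E) (x : Fin n → ℝ) (i : Fin n) :
    (gram11 u).mulVec x i = ⟪u i, ∑ j, x j • u j⟫ := by
  simp [gram11, Matrix.mulVec, dotProduct, inner_sum, real_inner_smul_right, mul_comm]

lemma gram11_det_ne_zero_iff {n : ℕ} (u : Fin n → E) :
    (gram11 u).det ≠ 0 ↔ LinearIndependent ℝ u := by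
  constructor
  · intro h
    rw [Fintype.linearIndependent_iff]
    intro x hx i
    by_contra hxi
    have hx0 : x ≠ 0 := fun h0 => hxi (by simp [h0])
    have : (gram11 u).mulVec x = 0 := by
      ext i; rw [gram11_mulVec, hx]; simp
    exact h ((Matrix.exists_mulVec_eq_zero_iff).mp ⟨x, hx0, this⟩)
  · intro h hdet
    obtain ⟨x, hx0, hx⟩ := (Matrix.exists_mulVec_eq_zero_iff).mpr hdet
    set s := ∑ j, x j • u j with hs
    have hsi : ∀ i, ⟪u i, s⟫ = 0 := by
      intro i; rw [← gram11_mulVec, hx]; rfl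
    have hss : s = 0 := by
      have : ⟪s, s⟫ = 0 := by
        rw [hs, sum_inner]
        simp only [real_inner_smul_left]
        refine Finset.sum_eq_zero fun i _ => ?_
        rw [← hs, hsi i, mul_zero]
      exact inner_self_eq_zero.mp this
    have := (Fintype.linearIndependent_iff.mp h) x hss
    exact hx0 (funext this)

lemma aux_haar_inst (p : ℕ) [MeasurableSpace E] [BorelSpace E] [FiniteDimensional ℝ E]
    (hE : Module.finrank ℝ E = p) :
    (μH[(p : ℝ)] : Measure E).IsAddHaarMeasure := by
  rw [← hE]
  infer_instance

lemma aux_image_linearMap [MeasurableSpace E] [BorelSpace E] [FiniteDimensional ℝ E]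
    [MeasurableSpace F] [BorelSpace F] [FiniteDimensional ℝ F]
    (p : ℕ) (bE : OrthonormalBasis (Fin p) ℝ E) (bF : OrthonormalBasis (Fin p) ℝ F)
    (g : E →ₗ[ℝ] F) (s : Set E) :
    μH[(p : ℝ)] (g '' s) =
      ENNReal.ofReal |(Matrix.of fun i j => bF.repr (g (bE j)) i).det| * μH[(p : ℝ)] s := by
  classical
  set eE := bE.repr
  set eF := bF.repr
  set h : EuclideanSpace ℝ (Fin p) →ₗ[ℝ] EuclideanSpace ℝ (Fin p) :=
    (eF.toLinearEquiv.toLinearMap.comp g).comp eE.symm.toLinearEquiv.toLinearMap with hh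
  have himg : g '' s = eF.symm '' (h '' (eE '' s)) := by
    rw [Set.image_image, Set.image_image]
    refine Set.image_congr fun x _ => ?_
    simp [hh]
  haveI : (μH[(p : ℝ)] : Measure (EuclideanSpace ℝ (Fin p))).IsAddHaarMeasure :=
    aux_haar_inst p (by simp)
  have h1 : μH[(p : ℝ)] (g '' s) = μH[(p : ℝ)] (h '' (eE '' s)) := by
    rw [himg]
    exact eF.symm.isometry.hausdorffMeasure_image (Or.inl (by positivity)) _
  have h2 : μH[(p : ℝ)] (h '' (eE '' s)) =
      ENNReal.ofReal |LinearMap.det h| * μH[(p : ℝ)] (eE '' s) :=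
    Measure.addHaar_image_linearMap _ h _
  have h3 : μH[(p : ℝ)] (eE '' s) = μH[(p : ℝ)] s :=
    eE.isometry.hausdorffMeasure_image (Or.inl (by positivity)) _
  have h4 : LinearMap.det h = (Matrix.of fun i j => bF.repr (g (bE j)) i).det := by
    rw [← LinearMap.det_toMatrix (EuclideanSpace.basisFun (Fin p) ℝ).toBasis h]
    congr 1
    ext i j
    rw [LinearMap.toMatrix_apply]
    simp [hh, eE, eF]
  rw [h1, h2, h3, h4]

lemma aux_univ_null {E : Type*} [NormedAddCommGroup E] [NormedSpace ℝ E]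
    [MeasurableSpace E] [BorelSpace E] [FiniteDimensional ℝ E]
    (p : ℕ) (h : Module.finrank ℝ E < p) :
    μH[(p : ℝ)] (Set.univ : Set E) = 0 := by
  have hcover : (Set.univ : Set E) = ⋃ n : ℕ, Metric.closedBall (0 : E) n := by
    ext x
    simp only [Set.mem_univ, Set.mem_iUnion, Metric.mem_closedBall, true_iff]
    obtain ⟨n, hn⟩ := exists_nat_ge (dist x 0)
    exact ⟨n, hn⟩
  rw [hcover]
  refine measure_iUnion_null fun n => ?_
  rcases Measure.hausdorffMeasure_zero_or_top
    (show (Module.finrank ℝ E : ℝ) < p by exact_mod_cast h)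
    (Metric.closedBall (0 : E) n) with h0 | htop
  · exact h0
  · exfalso
    have : μH[(Module.finrank ℝ E : ℝ)] (Metric.closedBall (0 : E) n) < ⊤ :=
      (isCompact_closedBall 0 n).measure_lt_top
    exact this.ne htop

lemma aux_subspace_null {X : Type*} [NormedAddCommGroup X] [InnerProductSpace ℝ X]
    [FiniteDimensional ℝ X] [MeasurableSpace X] [BorelSpace X]
    (p : ℕ) (U : Submodule ℝ X) (h : Module.finrank ℝ U < p) :
    μH[(p : ℝ)] (U : Set X) = 0 := by
  have hU : (U : Set X) = (U.subtypeₗᵢ) '' (Set.univ : Set U) := by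
    ext x
    simp [Submodule.subtypeₗᵢ]
    exact ⟨fun hx => ⟨x, hx, rfl⟩, by rintro ⟨a, b, rfl⟩; exact b⟩
  rw [hU, (U.subtypeₗᵢ).isometry.hausdorffMeasure_image (Or.inl (by positivity)) _]
  exact aux_univ_null p h

end Aux11

/-- for subspaces V, W of a finite-dimensional real inner product
space with dim V = p ≤ dim W = q, bases (v_j) of V and (w_i) of W, Gram
matrices A = (⟨w_i,w_j⟩), D = (⟨v_i,v_j⟩) and B = (⟨w_i,v_j⟩), the projection
factor of V onto W equals √(det(Bᵀ A⁻¹ B)/det D). -/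
theorem stmt_11 {X : Type*} [NormedAddCommGroup X] [InnerProductSpace ℝ X]
    [FiniteDimensional ℝ X] [MeasurableSpace X] [BorelSpace X]
    (p q : ℕ) (hpq : p ≤ q) (V W : Submodule ℝ X)
    (hV : Module.finrank ℝ V = p) (hW : Module.finrank ℝ W = q)
    (v : Fin p → X) (w : Fin q → X)
    (hvind : LinearIndependent ℝ v) (hwind : LinearIndependent ℝ w)
    (hvV : Submodule.span ℝ (Set.range v) = V)
    (hwW : Submodule.span ℝ (Set.range w) = W)
    (A : Matrix (Fin q) (Fin q) ℝ) (hA : A = Matrix.of fun i j => ⟪w i, w j⟫)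
    (B : Matrix (Fin q) (Fin p) ℝ) (hB : B = Matrix.of fun i j => ⟪w i, v j⟫)
    (D : Matrix (Fin p) (Fin p) ℝ) (hD : D = Matrix.of fun i j => ⟪v i, v j⟫)
    (S : Set X) (hSsub : S ⊆ (V : Set X)) (hSmeas : MeasurableSet S)
    (hS0 : μH[(p : ℝ)] S ≠ 0) (hStop : μH[(p : ℝ)] S ≠ ⊤) :
    μH[(p : ℝ)] ((fun x => (W.orthogonalProjection x : X)) '' S) / μH[(p : ℝ)] S =
      ENNReal.ofReal (Real.sqrt ((Bᵀ * A⁻¹ * B).det / D.det)) := by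
  classical
  set Pv : Fin p → X := fun j => (W.orthogonalProjection (v j) : X) with hPv
  -- determinants of the Gram matrices A and D are nonzero
  have hAdet : A.det ≠ 0 := by
    rw [hA]; exact (gram11_det_ne_zero_iff w).mpr hwind
  have hDdet : D.det ≠ 0 := by
    rw [hD]; exact (gram11_det_ne_zero_iff v).mpr hvind
  -- the Gram matrix of the projections is Bᵀ A⁻¹ B
  have hwmem : ∀ i, w i ∈ W := fun i => hwW ▸ Submodule.subset_span (Set.mem_range_self i)
  have hvmem : ∀ j, v j ∈ V := fun j => hvV ▸ Submodule.subset_span (Set.mem_range_self j)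
  set bW : Module.Basis (Fin q) ℝ W := (Module.Basis.span hwind).map (LinearEquiv.ofEq _ _ hwW) with hbWdef
  have hbW : ∀ k, (bW k : X) = w k := by
    intro k
    simp [hbWdef, Module.Basis.span_apply]
  set c : Matrix (Fin q) (Fin p) ℝ :=
    Matrix.of fun k j => bW.repr (W.orthogonalProjection (v j)) k with hcdef
  have hrep : ∀ j, Pv j = ∑ k, c k j • w k := by
    intro j
    have h0 : (W.orthogonalProjection (v j) : W) = ∑ k, c k j • bW k :=
      (bW.sum_repr _).symm
    have h1 : Pv j = ((∑ k, c k j • bW k : W) : X) := congrArg Subtype.val h0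
    rw [h1, Submodule.coe_sum]
    exact Finset.sum_congr rfl fun k _ => by rw [SetLike.val_smul, hbW]
  have hinner_w_Pv : ∀ i j, ⟪w i, Pv j⟫ = ⟪w i, v j⟫ := by
    intro i j
    calc ⟪w i, Pv j⟫
        = ⟪((⟨w i, hwmem i⟩ : W) : X), ((W.orthogonalProjection (v j) : W) : X)⟫ := rfl
      _ = ⟪(⟨w i, hwmem i⟩ : W), W.orthogonalProjection (v j)⟫ :=
          (Submodule.coe_inner _ _ _).symm
      _ = ⟪w i, v j⟫ := Submodule.inner_orthogonalProjection_eq_of_mem_left (K := W) _ _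
  have hAc : A * c = B := by
    ext i j
    rw [hA, hB]
    simp only [Matrix.mul_apply, Matrix.of_apply]
    rw [← hinner_w_Pv i j, hrep j, inner_sum]
    refine Finset.sum_congr rfl fun k _ => ?_
    rw [real_inner_smul_right]
    ring
  have hc : c = A⁻¹ * B := by
    rw [← hAc, ← Matrix.mul_assoc, Matrix.nonsing_inv_mul A (Ne.isUnit hAdet), Matrix.one_mul]
  have hAsymm : Aᵀ = A := by
    rw [hA]; ext i j; simp [Matrix.transpose_apply, real_inner_comm]
  have hG : gram11 Pv = Bᵀ * A⁻¹ * B := by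
    have h1 : gram11 Pv = cᵀ * B := by
      ext i j
      have hPvi : ⟪Pv i, Pv j⟫ = ⟪Pv i, v j⟫ :=
        calc ⟪Pv i, Pv j⟫
            = ⟪(W.orthogonalProjection (v i)), W.orthogonalProjection (v j)⟫ :=
              (Submodule.coe_inner _ _ _).symm
          _ = ⟪Pv i, v j⟫ := Submodule.inner_orthogonalProjection_eq_of_mem_left (K := W) _ _
      simp only [gram11, Matrix.of_apply, Matrix.mul_apply, Matrix.transpose_apply]
      rw [hPvi, hrep i, sum_inner]
      simp only [real_inner_smul_left]
      exact Finset.sum_congr rfl fun k _ => by rw [hB]; rfl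
    rw [h1, hc, Matrix.transpose_mul, Matrix.transpose_nonsing_inv, hAsymm, Matrix.mul_assoc]
  by_cases hPvind : LinearIndependent ℝ Pv
  · -- nondegenerate case
    set U : Submodule ℝ X := Submodule.span ℝ (Set.range Pv) with hUdef
    have hUrank : Module.finrank ℝ U = p := by
      rw [hUdef, finrank_span_eq_card hPvind, Fintype.card_fin]
    set PX : X →ₗ[ℝ] X := W.subtype ∘ₗ W.orthogonalProjection.toLinearMap with hPXdef
    have hmem : ∀ x : V, PX (x : X) ∈ U := by
      intro x
      have h1 : PX (x : X) ∈ Submodule.map PX V := Submodule.mem_map_of_mem x.2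
      have hmap : Submodule.map PX V = U := by
        rw [← hvV, Submodule.map_span, ← Set.range_comp]
        rfl
      rwa [hmap] at h1
    set g : V →ₗ[ℝ] U := (PX ∘ₗ V.subtype).codRestrict U (fun x => hmem x) with hgdef
    have hgapp : ∀ x : V, (g x : X) = (W.orthogonalProjection (x : X) : X) := fun x => rfl
    set s : Set V := Subtype.val ⁻¹' S with hsdef
    have hSs : S = (V.subtypeₗᵢ) '' s := by
      ext x
      constructor
      · intro hx
        exact ⟨⟨x, hSsub hx⟩, hx, rfl⟩
      · rintro ⟨y, hy, rfl⟩
        exact hy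
    have himg : (fun x => (W.orthogonalProjection x : X)) '' S = (U.subtypeₗᵢ) '' (g '' s) := by
      ext y
      constructor
      · rintro ⟨x, hx, rfl⟩
        exact ⟨g ⟨x, hSsub hx⟩, ⟨⟨x, hSsub hx⟩, hx, rfl⟩, rfl⟩
      · rintro ⟨-, ⟨x, hx, rfl⟩, rfl⟩
        exact ⟨(x : X), hx, (hgapp x).symm⟩
    set bE : OrthonormalBasis (Fin p) ℝ V :=
      (stdOrthonormalBasis ℝ V).reindex (finCongr hV) with hbE
    set bF : OrthonormalBasis (Fin p) ℝ U :=
      (stdOrthonormalBasis ℝ U).reindex (finCongr hUrank) with hbF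
    set M : Matrix (Fin p) (Fin p) ℝ := Matrix.of fun i j => bF.repr (g (bE j)) i with hM
    have hmeas : μH[(p : ℝ)] (g '' s) = ENNReal.ofReal |M.det| * μH[(p : ℝ)] s :=
      aux_image_linearMap p bE bF g s
    have hmS : μH[(p : ℝ)] S = μH[(p : ℝ)] s := by
      rw [hSs]
      exact (V.subtypeₗᵢ).isometry.hausdorffMeasure_image (Or.inl (by positivity)) _
    have hmP : μH[(p : ℝ)] ((fun x => (W.orthogonalProjection x : X)) '' S)
        = μH[(p : ℝ)] (g '' s) := by
      rw [himg]
      exact (U.subtypeₗᵢ).isometry.hausdorffMeasure_image (Or.inl (by positivity)) _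
    rw [hmP, hmeas, ← hmS, mul_div_assoc, ENNReal.div_self hS0 hStop, mul_one]
    -- it remains to identify the determinant factor
    congr 1
    set v' : Fin p → V := fun j => ⟨v j, hvmem j⟩ with hv'
    set C : Matrix (Fin p) (Fin p) ℝ := Matrix.of fun k j => bE.repr (v' j) k with hC
    have hsum : ∀ j, v' j = ∑ k, C k j • bE k := fun j => (bE.sum_repr (v' j)).symm
    have hDC : D = Cᵀ * C := by
      ext i j
      rw [hD]
      have h1 : (⟪v i, v j⟫ : ℝ) = ⟪v' i, v' j⟫ := (Submodule.coe_inner V (v' i) (v' j)).symm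
      have h2 : (⟪v' i, v' j⟫ : ℝ) = ⟪bE.repr (v' i), bE.repr (v' j)⟫ :=
        (bE.repr.inner_map_map _ _).symm
      show (⟪v i, v j⟫ : ℝ) = (Cᵀ * C) i j
      rw [h1, h2, PiLp.inner_apply]
      simp only [RCLike.inner_apply, starRingEnd_apply, star_trivial, Matrix.mul_apply,
        Matrix.transpose_apply, hC, Matrix.of_apply]
      exact Finset.sum_congr rfl fun _ _ => mul_comm _ _
    have hcoord : ∀ j k, bF.repr (g (v' j)) k = (M * C) k j := by
      intro j k
      have h0 : bF.repr (g (v' j)) k = EuclideanSpace.projₗ (𝕜 := ℝ) k (bF.repr (g (v' j))) :=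
        rfl
      rw [h0]
      conv_lhs => rw [hsum j]
      rw [map_sum, map_sum, map_sum]
      simp only [_root_.map_smul]
      simp [Matrix.mul_apply, EuclideanSpace.projₗ, PiLp.projₗ, hM, hC, mul_comm,
        smul_eq_mul]
    have hGC : Bᵀ * A⁻¹ * B = (M * C)ᵀ * (M * C) := by
      rw [← hG]
      ext i j
      have h1 : (⟪Pv i, Pv j⟫ : ℝ) = ⟪g (v' i), g (v' j)⟫ := by
        rw [Submodule.coe_inner, hgapp, hgapp]
      have h2 : (⟪g (v' i), g (v' j)⟫ : ℝ) = ⟪bF.repr (g (v' i)), bF.repr (g (v' j))⟫ :=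
        (bF.repr.inner_map_map _ _).symm
      show (⟪Pv i, Pv j⟫ : ℝ) = ((M * C)ᵀ * (M * C)) i j
      rw [h1, h2]
      simp only [Matrix.mul_apply, Matrix.transpose_apply, PiLp.inner_apply,
        RCLike.inner_apply, starRingEnd_apply, star_trivial]
      exact Finset.sum_congr rfl fun k _ => by
        rw [hcoord i k, hcoord j k, Matrix.mul_apply, Matrix.mul_apply]
        exact mul_comm _ _
    have hCdet : C.det ≠ 0 := by
      intro h0
      apply hDdet
      rw [hDC, Matrix.det_mul, Matrix.det_transpose, h0, mul_zero]
    have hnum : (Bᵀ * A⁻¹ * B).det = (M.det * C.det) ^ 2 := by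
      rw [hGC, Matrix.det_mul, Matrix.det_transpose, Matrix.det_mul]
      ring
    have hden : D.det = C.det ^ 2 := by
      rw [hDC, Matrix.det_mul, Matrix.det_transpose]
      ring
    rw [hnum, hden]
    have : (M.det * C.det) ^ 2 / C.det ^ 2 = M.det ^ 2 := by
      field_simp
    rw [this, Real.sqrt_sq_eq_abs]
  · -- degenerate case: the projections are dependent
    have hGdet : (Bᵀ * A⁻¹ * B).det = 0 := by
      rw [← hG]
      by_contra hne
      exact hPvind ((gram11_det_ne_zero_iff Pv).mp hne)
    rw [hGdet, zero_div, Real.sqrt_zero, ENNReal.ofReal_zero]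
    set U : Submodule ℝ X := Submodule.span ℝ (Set.range Pv) with hUdef
    have himg_sub : (fun x => (W.orthogonalProjection x : X)) '' S ⊆ (U : Set X) := by
      rintro - ⟨x, hxS, rfl⟩
      have hxV : x ∈ V := hSsub hxS
      set PX : X →ₗ[ℝ] X := W.subtype ∘ₗ W.orthogonalProjection.toLinearMap with hPXdef
      have : PX x ∈ Submodule.map PX V := Submodule.mem_map_of_mem hxV
      have hmap : Submodule.map PX V = U := by
        rw [← hvV, Submodule.map_span, ← Set.range_comp]
        rfl
      rw [hmap] at this
      exact this
    have hUlt : Module.finrank ℝ U < p := by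
      have hle : Module.finrank ℝ U ≤ p := by
        refine le_trans (by simpa [hUdef] using finrank_span_le_card (R := ℝ) (Set.range Pv)) ?_
        simpa using Finset.card_image_le (s := Finset.univ) (f := Pv)
      rcases lt_or_eq_of_le hle with h | h
      · exact h
      · exfalso
        apply hPvind
        rw [linearIndependent_iff_card_eq_finrank_span]
        simp only [Set.finrank]
        rw [← hUdef, h, Fintype.card_fin]
    have : μH[(p : ℝ)] ((fun x => (W.orthogonalProjection x : X)) '' S) = 0 :=
      measure_mono_null himg_sub (aux_subspace_null p U hUlt)
    rw [this, ENNReal.zero_div]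
end

section
/- Let V, W be subspaces of a finite-dimensional real inner product space with dim V = dim W = p, P : V → W the orthogonal projection, and let ν = v₁∧⋯∧v_p, ω = w₁∧⋯∧w_p be nonzero p-blades with v_i spanning V and w_i spanning W. Then the projection factor of V onto W equals |⟨ν,ω⟩|/(‖ν‖‖ω‖), where ⟨ν,ω⟩ = det(⟨v_i,w_j⟩) and ‖ν‖ = √det(⟨v_i,v_j⟩). -/
open MeasureTheory
open scoped RealInnerProductSpace
open scoped ENNReal NNReal Matrix

theorem aux_haar (p : ℕ) :
    MeasureTheory.Measure.IsAddHaarMeasure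
      (μH[(p:ℝ)] : Measure (EuclideanSpace ℝ (Fin p))) := by
  have hpi : (μH[(p:ℝ)] : Measure (Fin p → ℝ)) = volume := by
    simpa using (MeasureTheory.hausdorffMeasure_pi_real (ι := Fin p))
  set g : EuclideanSpace ℝ (Fin p) ≃L[ℝ] (Fin p → ℝ) := EuclideanSpace.equiv (Fin p) ℝ with hg
  have hlip : LipschitzWith ‖(g : EuclideanSpace ℝ (Fin p) →L[ℝ] (Fin p → ℝ))‖₊ g :=
    (g : EuclideanSpace ℝ (Fin p) →L[ℝ] (Fin p → ℝ)).lipschitz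
  have hlips : LipschitzWith ‖(g.symm : (Fin p → ℝ) →L[ℝ] EuclideanSpace ℝ (Fin p))‖₊ g.symm :=
    (g.symm : (Fin p → ℝ) →L[ℝ] EuclideanSpace ℝ (Fin p)).lipschitz
  set Kg : ℝ≥0 := ‖(g : EuclideanSpace ℝ (Fin p) →L[ℝ] (Fin p → ℝ))‖₊
  set Ks : ℝ≥0 := ‖(g.symm : (Fin p → ℝ) →L[ℝ] EuclideanSpace ℝ (Fin p))‖₊
  have upper : ∀ s : Set (EuclideanSpace ℝ (Fin p)),
      μH[(p:ℝ)] s ≤ (Ks : ℝ≥0∞) ^ (p:ℝ) * volume (g '' s) := by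
    intro s
    have : g.symm '' (g '' s) = s := by
      ext x; simp
    calc μH[(p:ℝ)] s = μH[(p:ℝ)] (g.symm '' (g '' s)) := by rw [this]
    _ ≤ (Ks : ℝ≥0∞) ^ (p:ℝ) * μH[(p:ℝ)] (g '' s) :=
        hlips.hausdorffMeasure_image_le (by positivity) _
    _ = (Ks : ℝ≥0∞) ^ (p:ℝ) * volume (g '' s) := by rw [hpi]
  have lower : ∀ s : Set (EuclideanSpace ℝ (Fin p)),
      volume (g '' s) ≤ (Kg : ℝ≥0∞) ^ (p:ℝ) * μH[(p:ℝ)] s := by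
    intro s
    rw [← hpi]
    exact hlip.hausdorffMeasure_image_le (by positivity) _
  haveI h1 : IsFiniteMeasureOnCompacts (μH[(p:ℝ)] : Measure (EuclideanSpace ℝ (Fin p))) := by
    constructor
    intro k hk
    calc μH[(p:ℝ)] k ≤ (Ks : ℝ≥0∞) ^ (p:ℝ) * volume (g '' k) := upper k
    _ < ⊤ := ENNReal.mul_lt_top (ENNReal.rpow_lt_top_of_nonneg (by positivity) ENNReal.coe_ne_top)
        (hk.image g.continuous).measure_lt_top
  haveI h2 : Measure.IsOpenPosMeasure (μH[(p:ℝ)] : Measure (EuclideanSpace ℝ (Fin p))) := by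
    constructor
    intro U hU hne h0
    have hopen : IsOpen (g '' U) := g.toHomeomorph.isOpenMap _ hU
    have : volume (g '' U) = 0 :=
      le_antisymm (by simpa [h0] using lower U) zero_le
    exact (hopen.measure_ne_zero volume (hne.image g)) this
  constructor

/-- for p-dimensional subspaces V, W with bases (v_i), (w_i),
the projection factor of V onto W equals
|det(⟨v_i,w_j⟩)| / (√det(⟨v_i,v_j⟩)·√det(⟨w_i,w_j⟩)). -/
theorem stmt_12 {X : Type*} [NormedAddCommGroup X] [InnerProductSpace ℝ X]
    [FiniteDimensional ℝ X] [MeasurableSpace X] [BorelSpace X]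
    (p : ℕ) (V W : Submodule ℝ X)
    (hV : Module.finrank ℝ V = p) (hW : Module.finrank ℝ W = p)
    (v w : Fin p → X)
    (hvind : LinearIndependent ℝ v) (hwind : LinearIndependent ℝ w)
    (hvV : Submodule.span ℝ (Set.range v) = V)
    (hwW : Submodule.span ℝ (Set.range w) = W)
    (S : Set X) (hSsub : S ⊆ (V : Set X)) (hSmeas : MeasurableSet S)
    (hS0 : μH[(p : ℝ)] S ≠ 0) (hStop : μH[(p : ℝ)] S ≠ ⊤) :
    μH[(p : ℝ)] ((fun x => (Submodule.orthogonalProjectionOnto W x : X)) '' S) / μH[(p : ℝ)] S =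
      ENNReal.ofReal (|(Matrix.of fun i j => ⟪v i, w j⟫).det| /
        (Real.sqrt (Matrix.of fun i j => ⟪v i, v j⟫).det *
         Real.sqrt (Matrix.of fun i j => ⟪w i, w j⟫).det)) := by
  classical
  haveI := aux_haar p
  let bV : OrthonormalBasis (Fin p) ℝ V := (stdOrthonormalBasis ℝ V).reindex (finCongr hV)
  let bW : OrthonormalBasis (Fin p) ℝ W := (stdOrthonormalBasis ℝ W).reindex (finCongr hW)
  set E := EuclideanSpace ℝ (Fin p) with hE
  let ιV : E → X := fun x => ((bV.repr.symm x : V) : X)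
  let ιW : E → X := fun x => ((bW.repr.symm x : W) : X)
  have hιV : Isometry ιV := (V.subtypeₗᵢ.comp bV.repr.symm.toLinearIsometry).isometry
  have hιW : Isometry ιW := (W.subtypeₗᵢ.comp bW.repr.symm.toLinearIsometry).isometry
  have hrangeV : Set.range ιV = (V : Set X) := by
    ext x
    constructor
    · rintro ⟨y, rfl⟩; exact (bV.repr.symm y).2
    · intro hx; exact ⟨bV.repr ⟨x, hx⟩, by simp [ιV]⟩
  let f : E →ₗ[ℝ] E :=
    (bW.repr.toLinearEquiv.toLinearMap).comp
      (((Submodule.orthogonalProjectionOnto W).toLinearMap).comp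
        (V.subtype.comp bV.repr.symm.toLinearEquiv.toLinearMap))
  set sE : Set E := ιV ⁻¹' S with hsE
  have hSE : ιV '' sE = S := Set.image_preimage_eq_of_subset (by rw [hrangeV]; exact hSsub)
  have hp0 : (0:ℝ) ≤ (p:ℝ) := by positivity
  have hmeasS : μH[(p:ℝ)] S = μH[(p:ℝ)] sE := by
    conv_lhs => rw [← hSE]
    exact hιV.hausdorffMeasure_image (Or.inl hp0) _
  have key : (fun x => (Submodule.orthogonalProjectionOnto W x : X)) '' S = ιW '' (f '' sE) := by
    conv_lhs => rw [← hSE]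
    rw [← Set.image_comp, ← Set.image_comp]
    apply Set.image_congr
    intro x _
    simp only [Function.comp_apply, ιW, f, ιV, LinearMap.comp_apply,
      LinearEquiv.coe_coe, LinearIsometryEquiv.coe_toLinearEquiv,
      ContinuousLinearMap.coe_coe, Submodule.coe_subtype,
      LinearIsometryEquiv.symm_apply_apply]
  have himg : μH[(p:ℝ)] ((fun x => (Submodule.orthogonalProjectionOnto W x : X)) '' S)
      = ENNReal.ofReal |LinearMap.det f| * μH[(p:ℝ)] sE := by
    rw [key, hιW.hausdorffMeasure_image (Or.inl hp0),
      Measure.addHaar_image_linearMap]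
  have hS0' : μH[(p:ℝ)] sE ≠ 0 := by rw [← hmeasS]; exact hS0
  have hStop' : μH[(p:ℝ)] sE ≠ ⊤ := by rw [← hmeasS]; exact hStop
  rw [himg, hmeasS, mul_div_assoc, ENNReal.div_self hS0' hStop', mul_one]
  -- now the linear algebra identity
  congr 1

  -- matrices
  have hvmem : ∀ i, v i ∈ V := fun i => hvV ▸ Submodule.subset_span ⟨i, rfl⟩
  have hwmem : ∀ j, w j ∈ W := fun j => hwW ▸ Submodule.subset_span ⟨j, rfl⟩
  let v' : Fin p → V := fun i => ⟨v i, hvmem i⟩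
  let w' : Fin p → W := fun j => ⟨w j, hwmem j⟩
  set M : Matrix (Fin p) (Fin p) ℝ := Matrix.of fun k i => ⟪((bW k : X)), ((bV i : X))⟫ with hM
  set A : Matrix (Fin p) (Fin p) ℝ := Matrix.of fun k i => ⟪((bV k : X)), v i⟫ with hA
  set B : Matrix (Fin p) (Fin p) ℝ := Matrix.of fun l j => ⟪((bW l : X)), w j⟫ with hB
  have hdetf : LinearMap.det f = M.det := by
    rw [← LinearMap.det_toMatrix (EuclideanSpace.basisFun (Fin p) ℝ).toBasis f]
    congr 1
    ext k i
    rw [LinearMap.toMatrix_apply]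
    simp only [f, LinearMap.comp_apply, LinearEquiv.coe_coe,
      LinearIsometryEquiv.coe_toLinearEquiv, ContinuousLinearMap.coe_coe,
      Submodule.coe_subtype, OrthonormalBasis.coe_toBasis,
      EuclideanSpace.basisFun_apply, OrthonormalBasis.repr_symm_single,
      OrthonormalBasis.coe_toBasis_repr_apply, OrthonormalBasis.repr_apply_apply,
      Submodule.inner_orthogonalProjectionOnto_eq_of_mem_left, hM, Matrix.of_apply,
      EuclideanSpace.inner_single_left, conj_trivial, one_mul]
  have expandV : ∀ (x y : X), x ∈ V → ⟪x, y⟫ = ∑ k, ⟪((bV k : X)), x⟫ * ⟪((bV k : X)), y⟫ := by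
    intro x y hx
    have h := bV.sum_repr' (⟨x, hx⟩ : V)
    have hx' : x = ∑ k, ⟪((bV k : X)), x⟫ • ((bV k : X)) := by
      have h2 := congrArg (Subtype.val) h
      simp only [AddSubmonoidClass.coe_finset_sum, SetLike.val_smul, Submodule.coe_inner] at h2
      exact h2.symm
    conv_lhs => rw [hx']
    rw [sum_inner]
    simp [real_inner_smul_left]
  have expandW : ∀ (x y : X), x ∈ W → ⟪x, y⟫ = ∑ l, ⟪((bW l : X)), x⟫ * ⟪((bW l : X)), y⟫ := by
    intro x y hx
    have h := bW.sum_repr' (⟨x, hx⟩ : W)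
    have hx' : x = ∑ l, ⟪((bW l : X)), x⟫ • ((bW l : X)) := by
      have h2 := congrArg (Subtype.val) h
      simp only [AddSubmonoidClass.coe_finset_sum, SetLike.val_smul, Submodule.coe_inner] at h2
      exact h2.symm
    conv_lhs => rw [hx']
    rw [sum_inner]
    simp [real_inner_smul_left]
  have hGv : (Matrix.of fun i j => (⟪v i, v j⟫:ℝ)) = Aᵀ * A := by
    ext i j
    rw [Matrix.of_apply, Matrix.mul_apply, expandV (v i) (v j) (hvmem i)]
    simp [Matrix.transpose_apply, hA]
  have hGw : (Matrix.of fun i j => (⟪w i, w j⟫:ℝ)) = Bᵀ * B := by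
    ext i j
    rw [Matrix.of_apply, Matrix.mul_apply, expandW (w i) (w j) (hwmem i)]
    simp [Matrix.transpose_apply, hB]
  have hGvw : (Matrix.of fun i j => (⟪v i, w j⟫:ℝ)) = Aᵀ * Mᵀ * B := by
    ext i j
    rw [Matrix.of_apply, expandV (v i) (w j) (hvmem i)]
    have : ∀ k, (⟪((bV k : X)), w j⟫:ℝ) = ∑ l, B l j * M l k := by
      intro k
      rw [real_inner_comm, expandW (w j) ((bV k : X)) (hwmem j)]
      simp [hB, hM]
    simp only [this]
    rw [Matrix.mul_apply]
    simp only [Matrix.mul_apply, Matrix.transpose_apply, Finset.sum_mul, Finset.mul_sum]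
    rw [Finset.sum_comm]
    congr 1; ext l; congr 1; ext k
    simp only [hA, Matrix.of_apply]
    ring
  have hdetA : A.det ≠ 0 := by
    have hv'ind : LinearIndependent ℝ v' := by
      apply LinearIndependent.of_comp V.subtype
      exact hvind
    have hspan' : Submodule.span ℝ (Set.range v') = ⊤ := by
      apply Submodule.map_injective_of_injective (Submodule.injective_subtype V)
      rw [Submodule.map_span, ← Set.range_comp]
      simpa [Submodule.map_top, Submodule.range_subtype, Function.comp_def, v', w'] using hvV
    let bv' : Module.Basis (Fin p) ℝ V := Module.Basis.mk hv'ind (le_of_eq hspan'.symm)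
    have hbv' : ⇑bv' = v' := Module.Basis.coe_mk _ _
    have hAeq : A = bV.toBasis.toMatrix v' := by
      ext k i
      rw [Module.Basis.toMatrix_apply]
      simp [hA, OrthonormalBasis.coe_toBasis_repr_apply, OrthonormalBasis.repr_apply_apply,
        Submodule.coe_inner, v']
    rw [hAeq, ← hbv', ← Module.Basis.det_apply]
    exact (bV.toBasis.isUnit_det bv').ne_zero
  have hdetB : B.det ≠ 0 := by
    have hw'ind : LinearIndependent ℝ w' := by
      apply LinearIndependent.of_comp W.subtype
      exact hwind
    have hspan' : Submodule.span ℝ (Set.range w') = ⊤ := by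
      apply Submodule.map_injective_of_injective (Submodule.injective_subtype W)
      rw [Submodule.map_span, ← Set.range_comp]
      simpa [Submodule.map_top, Submodule.range_subtype, Function.comp_def, v', w'] using hwW
    let bw' : Module.Basis (Fin p) ℝ W := Module.Basis.mk hw'ind (le_of_eq hspan'.symm)
    have hbw' : ⇑bw' = w' := Module.Basis.coe_mk _ _
    have hBeq : B = bW.toBasis.toMatrix w' := by
      ext k i
      rw [Module.Basis.toMatrix_apply]
      simp [hB, OrthonormalBasis.coe_toBasis_repr_apply, OrthonormalBasis.repr_apply_apply,
        Submodule.coe_inner, w']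
    rw [hBeq, ← hbw', ← Module.Basis.det_apply]
    exact (bW.toBasis.isUnit_det bw').ne_zero
  rw [hdetf, hGv, hGw, hGvw]
  rw [Matrix.det_mul, Matrix.det_mul, Matrix.det_mul, Matrix.det_mul,
    Matrix.det_transpose, Matrix.det_transpose, Matrix.det_transpose]
  rw [show A.det * A.det = A.det ^ 2 by ring, show B.det * B.det = B.det ^ 2 by ring,
    Real.sqrt_sq_eq_abs, Real.sqrt_sq_eq_abs]
  rw [abs_mul, abs_mul]
  field_simp
end

section
/- Let P : V → W be the orthogonal projection between p-dimensional subspaces of a real inner product space, and v₁,…,v_p a basis of V. Then √det(⟨Pv_i, Pv_j⟩) = π_{V,W} · √det(⟨v_i, v_j⟩), i.e., the norm of the projected blade Pv₁∧⋯∧Pv_p equals the norm of v₁∧⋯∧v_p times the projection factor. -/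
open MeasureTheory
open Matrix
open scoped RealInnerProductSpace

noncomputable def hausC (p : ℕ) : ENNReal :=
  μH[(p : ℝ)] (parallelepiped (fun i : Fin p => EuclideanSpace.single i (1 : ℝ)))

lemma gram_sqrt_eq {E : Type*} [NormedAddCommGroup E] [InnerProductSpace ℝ E] {p : ℕ}
    (b : OrthonormalBasis (Fin p) ℝ E) (v : Fin p → E) :
    Real.sqrt (Matrix.of fun i j => ⟪v i, v j⟫).det = |b.toBasis.det v| := by
  have hG : (Matrix.of fun i j => (⟪v i, v j⟫ : ℝ)) =
      (b.toBasis.toMatrix v)ᵀ * (b.toBasis.toMatrix v) := by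
    ext i j
    simp only [Matrix.mul_apply, Matrix.transpose_apply, Matrix.of_apply,
      Module.Basis.toMatrix_apply, OrthonormalBasis.coe_toBasis_repr_apply]
    rw [← b.repr.inner_map_map (v i) (v j), PiLp.inner_apply]
    simp only [RCLike.inner_apply, conj_trivial]
    exact Finset.sum_congr rfl fun _ _ => mul_comm _ _
  rw [hG, Matrix.det_mul, Matrix.det_transpose, ← sq, Real.sqrt_sq_eq_abs, Module.Basis.det_apply]

lemma haus_smul {E : Type*} [NormedAddCommGroup E] [InnerProductSpace ℝ E]
    [MeasurableSpace E] [BorelSpace E] [FiniteDimensional ℝ E] {p : ℕ}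
    (hE : Module.finrank ℝ E = p) (b : OrthonormalBasis (Fin p) ℝ E) (v : Fin p → E) :
    μH[(p : ℝ)] (parallelepiped v) =
      μH[(p : ℝ)] (parallelepiped (⇑b.toBasis)) * ENNReal.ofReal |b.toBasis.det v| := by
  haveI : Measure.IsAddHaarMeasure (μH[(p : ℝ)] : Measure E) := by
    rw [← hE]; exact isAddHaarMeasure_hausdorffMeasure
  have hu := MeasureTheory.Measure.addHaarMeasure_unique (μH[(p : ℝ)] : Measure E)
    b.toBasis.parallelepiped
  rw [← Module.Basis.addHaar_def] at hu
  conv_lhs => rw [hu]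
  rw [Measure.smul_apply, Measure.addHaar_parallelepiped, smul_eq_mul,
    Module.Basis.coe_parallelepiped]

lemma haus_onb {E : Type*} [NormedAddCommGroup E] [InnerProductSpace ℝ E]
    [MeasurableSpace E] [BorelSpace E] {p : ℕ}
    (b : OrthonormalBasis (Fin p) ℝ E) :
    μH[(p : ℝ)] (parallelepiped (⇑b.toBasis)) = hausC p := by
  have h := b.repr.isometry.hausdorffMeasure_image
    (Or.inl (by positivity : (0:ℝ) ≤ (p : ℝ))) (parallelepiped (⇑b.toBasis))
  rw [← h]
  have himg : ⇑b.repr '' parallelepiped (⇑b.toBasis)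
      = parallelepiped (⇑b.repr ∘ ⇑b.toBasis) :=
    image_parallelepiped (b.repr.toLinearEquiv : E →ₗ[ℝ] EuclideanSpace ℝ (Fin p)) _
  have hfun : ⇑b.repr ∘ ⇑b.toBasis = fun i => EuclideanSpace.single i (1 : ℝ) := by
    funext i
    simp [OrthonormalBasis.coe_toBasis, Function.comp]
  rw [himg, hfun, hausC]

set_option maxHeartbeats 1000000 in
lemma hausC_ne_zero (p : ℕ) : hausC p ≠ 0 := by
  classical
  haveI : Measure.IsAddHaarMeasure (μH[(p : ℝ)] : Measure (EuclideanSpace ℝ (Fin p))) := by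
    have hcast : ((p : ℕ) : ℝ)
        = ((Module.finrank ℝ (EuclideanSpace ℝ (Fin p)) : ℕ) : ℝ) := by
      rw [finrank_euclideanSpace_fin]
    rw [hcast]
    exact isAddHaarMeasure_hausdorffMeasure
  have := (EuclideanSpace.basisFun (Fin p) ℝ).toBasis.parallelepiped.interior_nonempty
  have hpos := MeasureTheory.Measure.measure_pos_of_nonempty_interior
    (μ := (μH[(p : ℝ)] : Measure (EuclideanSpace ℝ (Fin p)))) this
  rw [← haus_onb (EuclideanSpace.basisFun (Fin p) ℝ)]
  rw [Module.Basis.coe_parallelepiped] at hpos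
  exact ne_of_gt hpos

set_option maxHeartbeats 1000000 in
lemma hausC_ne_top (p : ℕ) : hausC p ≠ ⊤ := by
  classical
  haveI : Measure.IsAddHaarMeasure (μH[(p : ℝ)] : Measure (EuclideanSpace ℝ (Fin p))) := by
    have hcast : ((p : ℕ) : ℝ)
        = ((Module.finrank ℝ (EuclideanSpace ℝ (Fin p)) : ℕ) : ℝ) := by
      rw [finrank_euclideanSpace_fin]
    rw [hcast]
    exact isAddHaarMeasure_hausdorffMeasure
  have hc := (EuclideanSpace.basisFun (Fin p) ℝ).toBasis.parallelepiped.isCompact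
  have := hc.measure_lt_top (μ := (μH[(p : ℝ)] : Measure (EuclideanSpace ℝ (Fin p))))
  rw [← haus_onb (EuclideanSpace.basisFun (Fin p) ℝ)]
  rw [Module.Basis.coe_parallelepiped] at this
  exact ne_of_lt this

lemma haus_parallelepiped {E : Type*} [NormedAddCommGroup E] [InnerProductSpace ℝ E]
    [MeasurableSpace E] [BorelSpace E] [FiniteDimensional ℝ E] {p : ℕ}
    (hE : Module.finrank ℝ E = p) (v : Fin p → E) :
    μH[(p : ℝ)] (parallelepiped v) =
      hausC p * ENNReal.ofReal
        (Real.sqrt (Matrix.of fun i j => ⟪v i, v j⟫).det) := by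
  classical
  set b : OrthonormalBasis (Fin p) ℝ E := (stdOrthonormalBasis ℝ E).reindex (finCongr hE)
  rw [haus_smul hE b v, haus_onb b, gram_sqrt_eq b v]

/-- if π is the projection factor of P : V → W (the ratio by
which p-dimensional measure contracts), then the Gram determinant square root
of the projected vectors Pv_i equals π times that of the v_i. -/
theorem stmt_13 {X : Type*} [NormedAddCommGroup X] [InnerProductSpace ℝ X]
    [FiniteDimensional ℝ X] [MeasurableSpace X] [BorelSpace X]
    (p : ℕ) (V W : Submodule ℝ X)
    (hV : Module.finrank ℝ V = p) (hW : Module.finrank ℝ W = p)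
    (v : Fin p → X) (hvind : LinearIndependent ℝ v)
    (hvV : Submodule.span ℝ (Set.range v) = V)
    (π : ℝ) (hπ0 : 0 ≤ π)
    (hπ : ∀ S : Set X, S ⊆ (V : Set X) → MeasurableSet S →
      μH[(p : ℝ)] S ≠ 0 → μH[(p : ℝ)] S ≠ ⊤ →
      μH[(p : ℝ)] ((fun x => (W.orthogonalProjection x : X)) '' S) / μH[(p : ℝ)] S =
        ENNReal.ofReal π) :
    Real.sqrt (Matrix.of fun i j =>
        ⟪(W.orthogonalProjection (v i) : X), (W.orthogonalProjection (v j) : X)⟫).det =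
      π * Real.sqrt (Matrix.of fun i j => ⟪v i, v j⟫).det := by
  classical
  have h0p : (0:ℝ) ≤ (p:ℝ) := by positivity
  have hvmem : ∀ i, v i ∈ V := fun i => hvV ▸ Submodule.subset_span (Set.mem_range_self i)
  set v' : Fin p → V := fun i => ⟨v i, hvmem i⟩ with hv'
  set w' : Fin p → W := fun i => W.orthogonalProjection (v i) with hw'
  set S : Set X := parallelepiped v with hS
  set g : ℝ := Real.sqrt (Matrix.of fun i j => ⟪v i, v j⟫).det with hgdef
  set gP : ℝ := Real.sqrt (Matrix.of fun i j =>
      ⟪(W.orthogonalProjection (v i) : X), (W.orthogonalProjection (v j) : X)⟫).det with hgPdef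
  -- measure of S
  have hmuS : μH[(p:ℝ)] S = hausC p * ENNReal.ofReal g := by
    have hSV : S = ⇑(V.subtypeₗᵢ : V →ₗᵢ[ℝ] X) '' (parallelepiped v') := by
      rw [hS, show (⇑(V.subtypeₗᵢ : V →ₗᵢ[ℝ] X) '' (parallelepiped v'))
          = parallelepiped (⇑V.subtype ∘ v') from image_parallelepiped V.subtype v']
      rfl
    rw [hSV, (V.subtypeₗᵢ : V →ₗᵢ[ℝ] X).isometry.hausdorffMeasure_image (Or.inl h0p) _,
      haus_parallelepiped hV v']
    rfl
  -- measure of the image of S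
  have hmuPS : μH[(p:ℝ)] ((fun x => (W.orthogonalProjection x : X)) '' S)
      = hausC p * ENNReal.ofReal gP := by
    have hA : (fun x => (W.orthogonalProjection x : X)) '' S
        = ⇑(W.subtypeₗᵢ : W →ₗᵢ[ℝ] X) '' (parallelepiped w') := by
      rw [hS, show ((fun x => (W.orthogonalProjection x : X)) '' parallelepiped v)
          = parallelepiped (⇑(W.subtype.comp ((W.orthogonalProjection).toLinearMap)) ∘ v)
          from image_parallelepiped (W.subtype.comp ((W.orthogonalProjection).toLinearMap)) v,
        show (⇑(W.subtypeₗᵢ : W →ₗᵢ[ℝ] X) '' (parallelepiped w'))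
          = parallelepiped (⇑W.subtype ∘ w') from image_parallelepiped W.subtype w']
      rfl
    rw [hA, (W.subtypeₗᵢ : W →ₗᵢ[ℝ] X).isometry.hausdorffMeasure_image (Or.inl h0p) _,
      haus_parallelepiped hW w']
    rfl
  -- positivity of g
  have hg : 0 < g := by
    have hv'ind : LinearIndependent ℝ v' := LinearIndependent.of_comp V.subtype hvind
    have hspan : ⊤ ≤ Submodule.span ℝ (Set.range v') := by
      have hinj := Submodule.map_injective_of_injective (V.injective_subtype)
      refine ge_of_eq (hinj ?_)
      rw [Submodule.map_span, ← Set.range_comp, Submodule.map_top, Submodule.range_subtype]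
      exact (by exact hvV : Submodule.span ℝ (Set.range (⇑V.subtype ∘ v')) = V)
    let bv : Module.Basis (Fin p) ℝ V := Module.Basis.mk hv'ind hspan
    have hcoe : ⇑bv = v' := Module.Basis.coe_mk hv'ind hspan
    let b : OrthonormalBasis (Fin p) ℝ V := (stdOrthonormalBasis ℝ V).reindex (finCongr hV)
    have hdet : b.toBasis.det v' ≠ 0 := by
      rw [← hcoe]; exact (b.toBasis.isUnit_det bv).ne_zero
    have : g = |b.toBasis.det v'| := gram_sqrt_eq b v'
    rw [this]
    exact abs_pos.mpr hdet
  -- apply the hypothesis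
  have hSsub : S ⊆ (V : Set X) := by
    rintro x hx
    rw [hS, mem_parallelepiped_iff] at hx
    obtain ⟨t, -, rfl⟩ := hx
    exact Submodule.sum_mem V fun i _ => Submodule.smul_mem V _ (hvmem i)
  have hScomp : IsCompact S := IsCompact.image isCompact_Icc
    (continuous_finset_sum Finset.univ fun i _ => (continuous_apply i).smul continuous_const)
  have hS0 : μH[(p:ℝ)] S ≠ 0 := by
    rw [hmuS]
    exact mul_ne_zero (hausC_ne_zero p) (ENNReal.ofReal_pos.mpr hg).ne'
  have hStop : μH[(p:ℝ)] S ≠ ⊤ := by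
    rw [hmuS]
    exact ENNReal.mul_ne_top (hausC_ne_top p) ENNReal.ofReal_ne_top
  have hr := hπ S hSsub hScomp.measurableSet hS0 hStop
  rw [hmuPS, hmuS,
    ENNReal.mul_div_mul_left _ _ (hausC_ne_zero p) (hausC_ne_top p)] at hr
  have heq := (ENNReal.eq_div_iff (ENNReal.ofReal_pos.mpr hg).ne'
    ENNReal.ofReal_ne_top).mp hr.symm
  rw [← ENNReal.ofReal_mul hg.le] at heq
  have hfin := (ENNReal.ofReal_eq_ofReal_iff (mul_nonneg hg.le hπ0)
    (Real.sqrt_nonneg _)).mp heq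
  rw [hgPdef, ← hfin]
  ring
end

section
/- Let V be a p-dimensional subspace of an n-dimensional real inner product space X with orthonormal basis (u₁,…,u_n). For each p-element multi-index I = (i₁<⋯<i_p), let V_I = span(u_{i₁},…,u_{i_p}) and π_{V,V_I} its projection factor. Then ∑_I π_{V,V_I}² = 1, where the sum runs over all (n choose p) coordinate subspaces V_I. -/
open MeasureTheory

set_option maxHeartbeats 1000000

open MeasureTheory Finset Equiv Matrix

section CB
variable {n p : ℕ}

theorem cb_step1 (M : Matrix (Fin n) (Fin p) ℝ) :
    (Mᵀ * M).det = ∑ k : (Fin p → Fin n),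
      (∏ j, M (k j) j) * (M.submatrix k id).det := by
  rw [Matrix.det_apply']
  simp only [Matrix.mul_apply, Matrix.transpose_apply, Finset.prod_univ_sum,
    Fintype.piFinset_univ, Finset.mul_sum]
  rw [Finset.sum_comm]
  refine Finset.sum_congr rfl fun k _ => ?_
  rw [← Matrix.det_transpose, Matrix.det_apply', Finset.mul_sum]
  refine Finset.sum_congr rfl fun σ _ => ?_
  simp only [Matrix.transpose_apply, Matrix.submatrix_apply, id_eq]
  rw [Finset.prod_mul_distrib]
  ring

theorem cb_per_I (M : Matrix (Fin n) (Fin p) ℝ) (I : Finset (Fin n)) (h : I.card = p) :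
    ∑ τ : Equiv.Perm (Fin p),
      (∏ j, M (I.orderEmbOfFin h (τ j)) j) *
        (M.submatrix (fun j => I.orderEmbOfFin h (τ j)) id).det
      = ((M.submatrix (I.orderEmbOfFin h) id).det) ^ 2 := by
  have key : ∀ τ : Equiv.Perm (Fin p),
      (M.submatrix (fun j => I.orderEmbOfFin h (τ j)) id).det
        = Equiv.Perm.sign τ * (M.submatrix (I.orderEmbOfFin h) id).det := by
    intro τ
    have : (M.submatrix (fun j => I.orderEmbOfFin h (τ j)) id)
        = (M.submatrix (I.orderEmbOfFin h) id).submatrix τ id := by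
      ext i j; simp
    rw [this, Matrix.det_permute]
  calc ∑ τ : Equiv.Perm (Fin p), (∏ j, M (I.orderEmbOfFin h (τ j)) j) *
        (M.submatrix (fun j => I.orderEmbOfFin h (τ j)) id).det
      = (M.submatrix (I.orderEmbOfFin h) id).det *
        ∑ τ : Equiv.Perm (Fin p), (Equiv.Perm.sign τ : ℝ) *
          ∏ j, (M.submatrix (I.orderEmbOfFin h) id) (τ j) j := by
        rw [Finset.mul_sum]
        refine Finset.sum_congr rfl fun τ _ => ?_
        rw [key τ]
        simp only [Matrix.submatrix_apply, id_eq]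
        ring
    _ = _ := by rw [← Matrix.det_apply']; ring

theorem cb_step2 (M : Matrix (Fin n) (Fin p) ℝ) :
    ∑ k : (Fin p → Fin n), (∏ j, M (k j) j) * (M.submatrix k id).det
      = ∑ I : {I : Finset (Fin n) // I.card = p},
          ((M.submatrix (I.1.orderEmbOfFin I.2) id).det) ^ 2 := by
  classical
  rw [← Finset.sum_filter_add_sum_filter_not Finset.univ
    (fun k : Fin p → Fin n => Function.Injective k)]
  have h2 : ∑ k ∈ Finset.univ.filter
      (fun k : Fin p → Fin n => ¬ Function.Injective k),
      (∏ j, M (k j) j) * (M.submatrix k id).det = 0 := by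
    refine Finset.sum_eq_zero fun k hk => ?_
    have hk' : ¬ Function.Injective k := (Finset.mem_filter.mp hk).2
    simp only [Function.Injective] at hk'
    push_neg at hk'
    obtain ⟨i, j, hij, hne⟩ := hk'
    have : (M.submatrix k id).det = 0 :=
      Matrix.det_zero_of_row_eq hne (by ext c; simp [hij])
    rw [this, mul_zero]
  rw [h2, add_zero]
  have h3 : ∑ I : {I : Finset (Fin n) // I.card = p},
        ((M.submatrix (I.1.orderEmbOfFin I.2) id).det) ^ 2
      = ∑ a : {I : Finset (Fin n) // I.card = p} × Equiv.Perm (Fin p),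
          (∏ j, M (a.1.1.orderEmbOfFin a.1.2 (a.2 j)) j) *
            (M.submatrix (fun j => a.1.1.orderEmbOfFin a.1.2 (a.2 j)) id).det := by
    rw [Fintype.sum_prod_type]
    exact Finset.sum_congr rfl fun I _ => (cb_per_I M I.1 I.2).symm
  rw [h3]
  refine (Finset.sum_bij
    (fun (a : {I : Finset (Fin n) // I.card = p} × Equiv.Perm (Fin p)) _ =>
      fun j => a.1.1.orderEmbOfFin a.1.2 (a.2 j)) ?_ ?_ ?_ ?_).symm
  · intro a _
    simp only [Finset.mem_filter, Finset.mem_univ, true_and]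
    exact (a.1.1.orderEmbOfFin a.1.2).injective.comp a.2.injective
  · intro a _ b _ hab
    have hr : ∀ (c : {I : Finset (Fin n) // I.card = p} × Equiv.Perm (Fin p)),
        (Set.range fun j => (c.1.1.orderEmbOfFin c.1.2) (c.2 j))
          = (c.1.1 : Set (Fin n)) := by
      intro c
      rw [show (fun j => (c.1.1.orderEmbOfFin c.1.2) (c.2 j))
          = (c.1.1.orderEmbOfFin c.1.2) ∘ c.2 from rfl, Set.range_comp,
        Equiv.range_eq_univ, Set.image_univ, Finset.range_orderEmbOfFin]
    have hI : a.1 = b.1 := by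
      apply Subtype.ext
      apply Finset.coe_injective
      rw [← hr a, ← hr b]
      exact congrArg Set.range hab
    obtain ⟨a1, a2⟩ := a
    obtain ⟨b1, b2⟩ := b
    cases hI
    simp only [Prod.mk.injEq, true_and]
    ext j
    have h5 := congrFun hab j
    simp only at h5
    exact congrArg Fin.val ((a1.1.orderEmbOfFin a1.2).injective h5)
  · intro k hk
    simp only [Finset.mem_filter, Finset.mem_univ, true_and] at hk
    have hcard : (Finset.image k Finset.univ).card = p := by
      rw [Finset.card_image_of_injective _ hk, Finset.card_univ, Fintype.card_fin]
    have hmem : ∀ j, k j ∈ Finset.image k Finset.univ := fun j =>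
      Finset.mem_image_of_mem k (Finset.mem_univ j)
    set I : Finset (Fin n) := Finset.image k Finset.univ with hI
    have τinj : Function.Injective
        (fun j => (I.orderIsoOfFin hcard).symm ⟨k j, hmem j⟩) := by
      intro i j hij
      apply hk
      have := congrArg (fun x => ((I.orderIsoOfFin hcard) x : Fin n)) hij
      simpa using this
    refine ⟨⟨⟨I, hcard⟩, Equiv.ofBijective _
      (Finite.injective_iff_bijective.mp τinj)⟩, Finset.mem_univ _, ?_⟩
    funext j
    simp only [Equiv.ofBijective_apply]
    rw [← Finset.coe_orderIsoOfFin_apply]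
    simp
  · intro a _
    rfl

end CB

theorem hausdorff_haar (p : ℕ) :
    (μH[(p : ℝ)] : Measure (EuclideanSpace ℝ (Fin p))).IsAddHaarMeasure := by
  have hd : (0 : ℝ) ≤ (p : ℝ) := Nat.cast_nonneg p
  have hpi : (μH[(p : ℝ)] : Measure (Fin p → ℝ)) = volume := by
    have := MeasureTheory.hausdorffMeasure_pi_real (ι := Fin p)
    simpa [Fintype.card_fin] using this
  have lipL := (EuclideanSpace.equiv (Fin p) ℝ).lipschitz
  have lipL' := (EuclideanSpace.equiv (Fin p) ℝ).symm.lipschitz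
  have h1 : IsFiniteMeasureOnCompacts (μH[(p : ℝ)] : Measure (EuclideanSpace ℝ (Fin p))) := by
    constructor
    intro K hK
    have h := lipL'.hausdorffMeasure_image_le hd (EuclideanSpace.equiv (Fin p) ℝ '' K)
    have hKK : (EuclideanSpace.equiv (Fin p) ℝ).symm '' (EuclideanSpace.equiv (Fin p) ℝ '' K)
        = K := by
      rw [Set.image_image]; simp
    rw [hKK, hpi] at h
    have hcomp : IsCompact (EuclideanSpace.equiv (Fin p) ℝ '' K) :=
      hK.image (EuclideanSpace.equiv (Fin p) ℝ).continuous
    refine lt_of_le_of_lt h (ENNReal.mul_lt_top ?_ hcomp.measure_lt_top)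
    exact (ENNReal.coe_rpow_of_nonneg _ hd) ▸ ENNReal.coe_lt_top
  have h2 : (μH[(p : ℝ)] : Measure (EuclideanSpace ℝ (Fin p))).IsOpenPosMeasure := by
    constructor
    intro U hU hne h0
    have h := lipL.hausdorffMeasure_image_le hd U
    rw [h0, mul_zero, hpi] at h
    have hUo : IsOpen (EuclideanSpace.equiv (Fin p) ℝ '' U) :=
      (EuclideanSpace.equiv (Fin p) ℝ).toHomeomorph.isOpenMap U hU
    have hUe : (EuclideanSpace.equiv (Fin p) ℝ '' U).Nonempty :=
      hne.image (EuclideanSpace.equiv (Fin p) ℝ)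
    exact (hUo.measure_pos volume hUe).ne' (le_antisymm h zero_le)
  exact @MeasureTheory.Measure.IsAddHaarMeasure.mk _ _ _ _ _ h1 inferInstance h2

theorem factor_eq_det {X : Type*} [NormedAddCommGroup X] [InnerProductSpace ℝ X]
    [FiniteDimensional ℝ X] [MeasurableSpace X] [BorelSpace X] (p : ℕ)
    (V W : Submodule ℝ X) (bV : OrthonormalBasis (Fin p) ℝ V)
    (bW : OrthonormalBasis (Fin p) ℝ W) (c : ℝ) (hc : 0 ≤ c)
    (h : ∀ S : Set X, S ⊆ (V : Set X) → MeasurableSet S →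
      μH[(p : ℝ)] S ≠ 0 → μH[(p : ℝ)] S ≠ ⊤ →
      μH[(p : ℝ)] ((fun x => (W.orthogonalProjectionOnto x : X)) '' S) / μH[(p : ℝ)] S
        = ENNReal.ofReal c) :
    c = |(Matrix.of fun i j : Fin p =>
        (inner ℝ ((bW i : X)) ((bV j : X)) : ℝ)).det| := by
  haveI := hausdorff_haar p
  have hd : (0 : ℝ) ≤ (p : ℝ) := Nat.cast_nonneg p
  set A : EuclideanSpace ℝ (Fin p) →ₗ[ℝ] EuclideanSpace ℝ (Fin p) :=
    (bW.repr.toLinearMap.comp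
      (W.orthogonalProjectionOnto.toLinearMap.comp V.subtype)).comp
        bV.repr.symm.toLinearMap with hA
  -- determinant of A
  have hdetA : LinearMap.det A
      = (Matrix.of fun i j : Fin p =>
          (inner ℝ ((bW i : X)) ((bV j : X)) : ℝ)).det := by
    rw [← LinearMap.det_toMatrix (EuclideanSpace.basisFun (Fin p) ℝ).toBasis]
    congr 1
    ext i j
    rw [LinearMap.toMatrix_apply, OrthonormalBasis.coe_toBasis,
      EuclideanSpace.basisFun_apply, OrthonormalBasis.coe_toBasis_repr_apply,
      EuclideanSpace.basisFun_repr]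
    show bW.repr ((W.orthogonalProjectionOnto)
      ((bV.repr.symm (EuclideanSpace.single j 1) : V) : X)) i = _
    rw [OrthonormalBasis.repr_symm_single, OrthonormalBasis.repr_apply_apply,
      Submodule.inner_orthogonalProjectionOnto_eq_of_mem_left]
    rfl
  -- the test set
  set ψ : EuclideanSpace ℝ (Fin p) → X := fun t => ((bV.repr.symm t : V) : X) with hψdef
  have hψ : Isometry ψ := (V.subtypeₗᵢ.comp bV.repr.symm.toLinearIsometry).isometry
  set φ : EuclideanSpace ℝ (Fin p) → X := fun t => ((bW.repr.symm t : W) : X) with hφdef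
  have hφ : Isometry φ := (W.subtypeₗᵢ.comp bW.repr.symm.toLinearIsometry).isometry
  set T : Set (EuclideanSpace ℝ (Fin p)) := Metric.closedBall 0 1 with hT
  set S : Set X := ψ '' T with hS
  have hμS : μH[(p : ℝ)] S = μH[(p : ℝ)] T := hψ.hausdorffMeasure_image (Or.inl hd) T
  have hT0 : μH[(p : ℝ)] T ≠ 0 := by
    refine ne_of_gt (lt_of_lt_of_le (Metric.measure_ball_pos (μH[(p : ℝ)]) (0 : EuclideanSpace ℝ (Fin p)) one_pos) ?_)
    exact measure_mono Metric.ball_subset_closedBall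
  have hTtop : μH[(p : ℝ)] T ≠ ⊤ := (isCompact_closedBall 0 1).measure_lt_top.ne
  have hSV : S ⊆ (V : Set X) := by
    rintro x ⟨t, _, rfl⟩
    exact ((bV.repr.symm t : V)).2
  have hSm : MeasurableSet S :=
    (((isCompact_closedBall (0 : EuclideanSpace ℝ (Fin p)) 1).image
      hψ.continuous)).isClosed.measurableSet
  have himg : (fun x => (W.orthogonalProjectionOnto x : X)) '' S = φ '' (A '' T) := by
    rw [hS, ← Set.image_comp, ← Set.image_comp]
    refine congrFun (congrArg _ ?_) T
    funext t
    show ((W.orthogonalProjectionOnto ((bV.repr.symm t : V) : X) : W) : X)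
      = ((bW.repr.symm (bW.repr (W.orthogonalProjectionOnto ((bV.repr.symm t : V) : X))) : W) : X)
    rw [LinearIsometryEquiv.symm_apply_apply]
  have hμimg : μH[(p : ℝ)] ((fun x => (W.orthogonalProjectionOnto x : X)) '' S)
      = ENNReal.ofReal |LinearMap.det A| * μH[(p : ℝ)] T := by
    rw [himg, hφ.hausdorffMeasure_image (Or.inl hd),
      MeasureTheory.Measure.addHaar_image_linearMap]
  have := h S hSV hSm (by rw [hμS]; exact hT0) (by rw [hμS]; exact hTtop)
  rw [hμimg, hμS, mul_div_assoc, ENNReal.div_self hT0 hTtop, mul_one] at this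
  have := (ENNReal.ofReal_eq_ofReal_iff (abs_nonneg _) hc).mp this
  rw [← this, hdetA]


/-- real Pythagorean theorem for subspaces, factor form: for a
p-dimensional subspace V of an n-dimensional real inner product space with
orthonormal basis (u_i), the squares of the projection factors of V onto all
p-dimensional coordinate subspaces V_I sum to 1. -/
theorem stmt_14 {X : Type*} [NormedAddCommGroup X] [InnerProductSpace ℝ X]
    [FiniteDimensional ℝ X] [MeasurableSpace X] [BorelSpace X]
    (n p : ℕ) (hn : Module.finrank ℝ X = n)
    (V : Submodule ℝ X) (hV : Module.finrank ℝ V = p) (hp : p ≠ 0)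
    (u : Fin n → X) (hu : Orthonormal ℝ u)
    (huspan : Submodule.span ℝ (Set.range u) = ⊤)
    (π : Finset (Fin n) → ℝ) (hπ0 : ∀ I, 0 ≤ π I)
    (hπ : ∀ I : Finset (Fin n), I.card = p →
      ∀ S : Set X, S ⊆ (V : Set X) → MeasurableSet S →
      μH[(p : ℝ)] S ≠ 0 → μH[(p : ℝ)] S ≠ ⊤ →
      μH[(p : ℝ)] ((fun x =>
          ((Submodule.span ℝ (u '' I)).orthogonalProjectionOnto x : X)) '' S) /
        μH[(p : ℝ)] S = ENNReal.ofReal (π I)) :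
    ∑ I ∈ Finset.univ.filter (fun I : Finset (Fin n) => I.card = p), π I ^ 2 = 1 := by
  classical
  -- orthonormal basis of V indexed by Fin p
  let bV : OrthonormalBasis (Fin p) ℝ V :=
    (stdOrthonormalBasis ℝ V).reindex (finCongr hV)
  -- u as an orthonormal basis of X
  let ub : OrthonormalBasis (Fin n) ℝ X := OrthonormalBasis.mk hu huspan.ge
  have hub : ∀ i, ub i = u i := fun i => by
    simp [ub, OrthonormalBasis.coe_mk]
  -- the coefficient matrix
  set M : Matrix (Fin n) (Fin p) ℝ :=
    Matrix.of (fun i j => (inner ℝ (u i) ((bV j : X)) : ℝ)) with hM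
  -- Parseval
  have parseval : ∀ x y : X,
      ∑ i, (inner ℝ (u i) x : ℝ) * (inner ℝ (u i) y : ℝ) = (inner ℝ x y : ℝ) := by
    intro x y
    have h1 := ub.repr.inner_map_map x y
    rw [← h1, PiLp.inner_apply]
    refine Finset.sum_congr rfl fun i _ => ?_
    rw [OrthonormalBasis.repr_apply_apply, OrthonormalBasis.repr_apply_apply, hub]
    simp [RCLike.inner_apply, conj_trivial, mul_comm]
  -- Gram identity
  have hMTM : Mᵀ * M = 1 := by
    ext j k
    rw [Matrix.mul_apply]
    simp only [Matrix.transpose_apply, hM, Matrix.of_apply]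
    rw [parseval ((bV j : X)) ((bV k : X)), ← Submodule.coe_inner]
    rw [orthonormal_iff_ite.mp bV.orthonormal, Matrix.one_apply]
  -- the key identification of the projection factors
  have key : ∀ (I : Finset (Fin n)) (h : I.card = p),
      π I = |(M.submatrix (I.orderEmbOfFin h) id).det| := by
    intro I h
    set W : Submodule ℝ X := Submodule.span ℝ (u '' (I : Set (Fin n))) with hW
    let bW0 : OrthonormalBasis {x // x ∈ I} ℝ
        (Submodule.span ℝ ((I.image u : Finset X) : Set X)) :=
      OrthonormalBasis.span hu I
    let ofEq : Submodule.span ℝ ((I.image u : Finset X) : Set X) ≃ₗᵢ[ℝ] W :=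
      LinearIsometryEquiv.ofEq _ _ (by rw [Finset.coe_image])
    let bW : OrthonormalBasis (Fin p) ℝ W :=
      (bW0.map ofEq).reindex ((I.orderIsoOfFin h).toEquiv.symm)
    have hbW : ∀ j, (bW j : X) = u (I.orderEmbOfFin h j) := by
      intro j
      have h1 : bW j = (bW0.map ofEq) ((I.orderIsoOfFin h) j) := by
        rw [OrthonormalBasis.reindex_apply]
        rfl
      rw [h1, OrthonormalBasis.map_apply]
      show ((bW0 ((I.orderIsoOfFin h) j) : X)) = u ((I.orderEmbOfFin h) j)
      rw [OrthonormalBasis.span_apply, ← Finset.coe_orderIsoOfFin_apply I h j]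
    have hfd := factor_eq_det p V W bV bW (π I) (hπ0 I) (hπ I h)
    have hmat : (Matrix.of fun i j : Fin p =>
        (inner ℝ ((bW i : X)) ((bV j : X)) : ℝ)) = M.submatrix (I.orderEmbOfFin h) id := by
      ext i j
      rw [Matrix.submatrix_apply, hM]
      simp only [Matrix.of_apply, id_eq]
      rw [hbW i]
    rw [hfd, hmat]
  -- Cauchy–Binet
  have cb : ∑ I : {I : Finset (Fin n) // I.card = p},
      ((M.submatrix (I.1.orderEmbOfFin I.2) id).det) ^ 2 = (Mᵀ * M).det :=
    ((cb_step2 M).symm).trans (cb_step1 M).symm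
  calc ∑ I ∈ Finset.univ.filter (fun I : Finset (Fin n) => I.card = p), π I ^ 2
      = ∑ I : {I : Finset (Fin n) // I.card = p}, π I.1 ^ 2 :=
        Finset.sum_subtype _ (by simp) _
    _ = ∑ I : {I : Finset (Fin n) // I.card = p},
          ((M.submatrix (I.1.orderEmbOfFin I.2) id).det) ^ 2 := by
        refine Finset.sum_congr rfl fun I _ => ?_
        rw [key I.1 I.2, sq_abs]
    _ = (Mᵀ * M).det := cb
    _ = 1 := by rw [hMTM, Matrix.det_one]
end

section
/- Let V be a p-dimensional subspace of an n-dimensional real inner product space X, p ≤ q ≤ n, and S ⊂ V a measurable set. Then |S|_p² = (n−p choose n−q)⁻¹ · ∑_I |S_I|_p², where S_I are the orthogonal projections of S onto all q-dimensional coordinate subspaces V_I of an orthonormal basis of X. -/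
open MeasureTheory
open scoped ENNReal

open MeasureTheory Module Finset Equiv Equiv.Perm Function Matrix
open scoped ENNReal RealInnerProductSpace

namespace CBProof

-- === Cauchy–Binet part (already verified) ===
section CB
variable {R : Type*} [CommRing R] {m : Type*} [Fintype m] [DecidableEq m] {p : ℕ}

open Matrix in
omit [Fintype m] [DecidableEq m] in
theorem cb_aux₁ (B : Matrix (Fin p) m R) (A : Matrix m (Fin p) R) {r : Fin p → m}
    (H : ¬Function.Injective r) :
    (∑ σ : Perm (Fin p), Equiv.Perm.sign σ * ∏ x, B (σ x) (r x) * A (r x) x) = 0 := by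
  obtain ⟨i, j, hpij, hij⟩ : ∃ i j, r i = r j ∧ i ≠ j := by
    rw [Function.Injective] at H
    push_neg at H
    obtain ⟨i, j, h1, h2⟩ := H
    exact ⟨i, j, h1, h2⟩
  exact
    sum_involution (fun σ _ => σ * Equiv.swap i j)
      (fun σ _ => by
        have : (∏ x, B (σ x) (r x)) = ∏ x, B ((σ * Equiv.swap i j) x) (r x) :=
          Fintype.prod_equiv (Equiv.swap i j) _ _ (by simp [Equiv.apply_swap_eq_self hpij])
        simp [this, sign_swap hij, -sign_swap', prod_mul_distrib])
      (fun σ _ _ => (not_congr mul_swap_eq_iff).mpr hij) (fun _ _ => mem_univ _) fun σ _ =>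
      mul_swap_involutive i j σ

open Matrix in
omit [Fintype m] [DecidableEq m] in
theorem cb_expand (B : Matrix (Fin p) m R) (A : Matrix m (Fin p) R) (s : Finset m) :
    Matrix.det (Matrix.of fun j j' => ∑ k ∈ s, B j k * A k j') =
      ∑ r ∈ Fintype.piFinset (fun _ : Fin p => s), ∑ σ : Perm (Fin p),
        Equiv.Perm.sign σ * ∏ i, B (σ i) (r i) * A (r i) i := by
  simp only [det_apply', of_apply]
  have : ∀ σ : Perm (Fin p), (∏ i, ∑ k ∈ s, B (σ i) k * A k i) =
      ∑ r ∈ Fintype.piFinset (fun _ : Fin p => s), ∏ i, B (σ i) (r i) * A (r i) i :=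
    fun σ => Finset.prod_univ_sum (fun _ => s) (fun i k => B (σ i) k * A k i)
  rw [Finset.sum_comm]
  exact Finset.sum_congr rfl fun σ _ => by rw [this σ, Finset.mul_sum]

open Matrix in
omit [Fintype m] [DecidableEq m] in
theorem cb_aux₂ (M N : Matrix (Fin p) (Fin p) R) :
    (∑ τ : Perm (Fin p), ∑ σ : Perm (Fin p),
      Equiv.Perm.sign σ * ∏ i, M (σ i) (τ i) * N (τ i) i) = det (M * N) := by
  classical
  refine Eq.symm ?_
  calc det (M * N)
      = ∑ r : Fin p → Fin p, ∑ σ : Perm (Fin p),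
          Equiv.Perm.sign σ * ∏ i, M (σ i) (r i) * N (r i) i := by
        have : (M * N) = Matrix.of fun j j' => ∑ k ∈ univ, M j k * N k j' := by
          ext j j'; exact Matrix.mul_apply
        rw [this, cb_expand, Fintype.piFinset_univ]
    _ = ∑ r : Fin p → Fin p with Function.Bijective r, ∑ σ : Perm (Fin p),
          Equiv.Perm.sign σ * ∏ i, M (σ i) (r i) * N (r i) i := by
        refine (sum_subset (filter_subset _ _) fun f _ hbij ↦
          cb_aux₁ M N fun hinj => ?_).symm
        simp only [mem_filter, mem_univ, true_and] at hbij
        exact hbij (Finite.injective_iff_bijective.mp hinj)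
    _ = ∑ τ : Perm (Fin p), ∑ σ : Perm (Fin p),
          Equiv.Perm.sign σ * ∏ i, M (σ i) (τ i) * N (τ i) i :=
      sum_bij (fun r h ↦ Equiv.ofBijective r (mem_filter.1 h).2) (fun _ _ ↦ mem_univ _)
        (fun _ _ _ _ h ↦ by injection h)
        (fun b _ ↦ ⟨b, mem_filter.2 ⟨mem_univ _, b.bijective⟩, Equiv.coe_fn_injective rfl⟩)
        fun _ _ ↦ rfl

open Matrix in
/-- Cauchy–Binet formula. -/
theorem cauchyBinet [LinearOrder m] (B : Matrix (Fin p) m R) (A : Matrix m (Fin p) R)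
    (s : Finset m) :
    Matrix.det (Matrix.of fun j j' => ∑ k ∈ s, B j k * A k j') =
      ∑ J ∈ s.powersetCard p,
        (if h : J.card = p then
          Matrix.det (B.submatrix id (J.orderEmbOfFin h)) *
          Matrix.det (A.submatrix (J.orderEmbOfFin h) id) else 0) := by
  classical
  rw [cb_expand]
  set F : (Fin p → m) → R := fun r => ∑ σ : Perm (Fin p),
    Equiv.Perm.sign σ * ∏ i, B (σ i) (r i) * A (r i) i with hF
  have h1 : ∑ r ∈ Fintype.piFinset (fun _ : Fin p => s), F r
      = ∑ r ∈ (Fintype.piFinset (fun _ : Fin p => s)).filter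
          (fun r => Function.Injective r), F r := by
    refine (sum_subset (filter_subset _ _) fun r hr hrinj => ?_).symm
    simp only [mem_filter, hr, true_and] at hrinj
    exact cb_aux₁ B A hrinj
  rw [h1]
  have hmaps : ∀ r ∈ (Fintype.piFinset (fun _ : Fin p => s)).filter
      (fun r => Function.Injective r), Finset.image r univ ∈ s.powersetCard p := by
    intro r hr
    simp only [mem_filter, Fintype.mem_piFinset] at hr
    rw [mem_powersetCard]
    constructor
    · intro x hx
      simp only [mem_image] at hx
      obtain ⟨i, _, rfl⟩ := hx
      exact hr.1 i
    · rw [Finset.card_image_of_injective _ hr.2, card_univ, Fintype.card_fin]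
  rw [← Finset.sum_fiberwise_of_maps_to hmaps F]
  refine Finset.sum_congr rfl fun J hJmem => ?_
  have hJ : J.card = p := (mem_powersetCard.mp hJmem).2
  have hJs : J ⊆ s := (mem_powersetCard.mp hJmem).1
  rw [dif_pos hJ]
  set emb := J.orderEmbOfFin hJ with hemb
  have h2 : ∑ r ∈ ((Fintype.piFinset (fun _ : Fin p => s)).filter
        (fun r => Function.Injective r)).filter (fun r => Finset.image r univ = J), F r
      = ∑ τ : Perm (Fin p), F (emb ∘ τ) := by
    symm
    refine Finset.sum_bij (fun (τ : Perm (Fin p)) (_ : τ ∈ univ) => (⇑emb ∘ ⇑τ : Fin p → m))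
      ?_ ?_ ?_ (fun _ _ => rfl)
    · intro τ _
      simp only [mem_filter, Fintype.mem_piFinset]
      have himg : Finset.image (emb ∘ τ) univ = J := by
        apply Finset.coe_injective
        rw [Finset.coe_image, Finset.coe_univ, Set.image_univ, Set.range_comp,
          Equiv.range_eq_univ, Set.image_univ, Finset.range_orderEmbOfFin]
      refine ⟨⟨fun i => hJs (Finset.orderEmbOfFin_mem J hJ (τ i)), ?_⟩, himg⟩
      exact (J.orderEmbOfFin hJ).injective.comp τ.injective
    · intro τ₁ _ τ₂ _ h
      exact Equiv.coe_fn_injective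
        (funext fun i => (J.orderEmbOfFin hJ).injective (congrFun h i))
    · intro r hr
      simp only [mem_filter, Fintype.mem_piFinset] at hr
      obtain ⟨⟨_, hrinj⟩, hrimg⟩ := hr
      have hmem : ∀ i, r i ∈ J := fun i => by
        rw [← hrimg]; exact Finset.mem_image_of_mem r (mem_univ i)
      set τ₀ : Fin p → Fin p := fun i => (J.orderIsoOfFin hJ).symm ⟨r i, hmem i⟩ with hτ₀
      have hτ₀inj : Function.Injective τ₀ := by
        intro i j h
        apply hrinj
        have := congrArg (fun z => ((J.orderIsoOfFin hJ) z : m)) h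
        simpa [hτ₀] using this
      have hτ₀bij : Function.Bijective τ₀ := Finite.injective_iff_bijective.mp hτ₀inj
      refine ⟨Equiv.ofBijective τ₀ hτ₀bij, mem_univ _, ?_⟩
      funext i
      show emb (τ₀ i) = r i
      have : (emb (τ₀ i) : m) = ((J.orderIsoOfFin hJ) (τ₀ i) : m) :=
        (Finset.coe_orderIsoOfFin_apply J hJ (τ₀ i)).symm
      rw [this, hτ₀]
      simp
  rw [h2]
  have h3 : ∀ τ : Perm (Fin p), F (emb ∘ τ) = ∑ σ : Perm (Fin p),
      Equiv.Perm.sign σ * ∏ i, (B.submatrix id emb) (σ i) (τ i) *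
        (A.submatrix emb id) (τ i) i := by
    intro τ; rfl
  calc ∑ τ : Perm (Fin p), F (emb ∘ τ)
      = ∑ τ : Perm (Fin p), ∑ σ : Perm (Fin p),
          Equiv.Perm.sign σ * ∏ i, (B.submatrix id emb) (σ i) (τ i) *
            (A.submatrix emb id) (τ i) i := Finset.sum_congr rfl fun τ _ => h3 τ
    _ = det (B.submatrix id emb * A.submatrix emb id) := cb_aux₂ _ _
    _ = det (B.submatrix id emb) * det (A.submatrix emb id) := det_mul _ _

end CB

-- === counting lemma (already verified) ===
lemma count_supersets {n qq pp : ℕ} (J : Finset (Fin n)) (hJ : J.card = pp) (hpq : pp ≤ qq) :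
    (((Finset.univ : Finset (Fin n)).powersetCard qq).filter (fun I => J ⊆ I)).card
      = (n - pp).choose (qq - pp) := by
  classical
  have hcard : ((Finset.univ \ J).powersetCard (qq - pp)).card = (n - pp).choose (qq - pp) := by
    rw [Finset.card_powersetCard, Finset.card_sdiff_of_subset (Finset.subset_univ J), hJ,
      Finset.card_univ, Fintype.card_fin]
  rw [← hcard]
  apply Finset.card_bij (fun I _ => I \ J)
  · intro I hI
    simp only [Finset.mem_filter, Finset.mem_powersetCard] at hI
    obtain ⟨⟨-, hIcard⟩, hJI⟩ := hI
    rw [Finset.mem_powersetCard]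
    exact ⟨Finset.sdiff_subset_sdiff (Finset.subset_univ I) Finset.Subset.rfl,
      by rw [Finset.card_sdiff_of_subset hJI, hIcard, hJ]⟩
  · intro I₁ h₁ I₂ h₂ h
    simp only [Finset.mem_filter, Finset.mem_powersetCard] at h₁ h₂
    rw [← Finset.sdiff_union_of_subset h₁.2, ← Finset.sdiff_union_of_subset h₂.2, h]
  · intro K hK
    rw [Finset.mem_powersetCard] at hK
    obtain ⟨hKsub, hKcard⟩ := hK
    have hdisj : Disjoint K J := by
      refine Finset.disjoint_left.mpr fun a haK haJ => ?_
      have := hKsub haK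
      simp only [Finset.mem_sdiff] at this
      exact this.2 haJ
    refine ⟨K ∪ J, ?_, ?_⟩
    · simp only [Finset.mem_filter, Finset.mem_powersetCard]
      refine ⟨⟨Finset.subset_univ _, ?_⟩, Finset.subset_union_right⟩
      rw [Finset.card_union_of_disjoint hdisj, hKcard, hJ]
      omega
    · rw [Finset.union_sdiff_right]
      exact Finset.sdiff_eq_self_of_disjoint hdisj

-- === measure lemmas (already verified) ===
section Measure
variable {X : Type*} [NormedAddCommGroup X] [InnerProductSpace ℝ X]
    [FiniteDimensional ℝ X] [MeasurableSpace X] [BorelSpace X] {p : ℕ}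

lemma hausdorff_zero_of_subspace_lt (W : Submodule ℝ X) (hW : finrank ℝ W < p)
    (T : Set X) (hT : T ⊆ (W : Set X)) : μH[(p : ℝ)] T = 0 := by
  have h1 : μH[(p : ℝ)] (W : Set X) = 0 := by
    have hiso : Isometry ((↑) : W → X) := (Submodule.subtypeₗᵢ W).isometry
    have himg : ((↑) : W → X) '' Set.univ = (W : Set X) := by
      rw [Set.image_univ, Subtype.range_coe]
    rw [← himg, hiso.hausdorffMeasure_image (Or.inl (by positivity))]
    have : (μH[(p : ℝ)] : Measure W) = 0 :=
      Real.hausdorffMeasure_of_finrank_lt (by exact_mod_cast hW)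
    rw [this]; rfl
  exact le_antisymm (h1 ▸ measure_mono hT) zero_le

lemma key_image (g : EuclideanSpace ℝ (Fin p) →ₗ[ℝ] X)
    (T : Set (EuclideanSpace ℝ (Fin p))) :
    0 ≤ LinearMap.det ((LinearMap.adjoint g) ∘ₗ g) ∧
    μH[(p : ℝ)] (g '' T) =
      ENNReal.ofReal (Real.sqrt (LinearMap.det ((LinearMap.adjoint g) ∘ₗ g))) *
        μH[(p : ℝ)] T := by
  have hfr : finrank ℝ (EuclideanSpace ℝ (Fin p)) = p := finrank_euclideanSpace_fin
  by_cases hg : Function.Injective g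
  · set W := LinearMap.range g with hWdef
    have hWfin : finrank ℝ W = p := by
      rw [LinearMap.finrank_range_of_inj hg, hfr]
    let bW : OrthonormalBasis (Fin p) ℝ W :=
      (stdOrthonormalBasis ℝ W).reindex (finCongr hWfin)
    let m : EuclideanSpace ℝ (Fin p) →ₗ[ℝ] EuclideanSpace ℝ (Fin p) :=
      (bW.repr.toLinearEquiv.toLinearMap) ∘ₗ g.rangeRestrict
    have hgx : ∀ x, g x = (W.subtypeₗᵢ) (bW.repr.symm (m x)) := by
      intro x
      simp only [m, LinearMap.coe_comp, Function.comp_apply, LinearEquiv.coe_coe,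
        LinearIsometryEquiv.coe_toLinearEquiv, LinearIsometryEquiv.symm_apply_apply]
      rfl
    have hinner : ∀ x y, ⟪g x, g y⟫ = ⟪m x, m y⟫ := by
      intro x y
      rw [hgx, hgx, (W.subtypeₗᵢ).inner_map_map, bW.repr.symm.inner_map_map]
    have hadj : (LinearMap.adjoint g) ∘ₗ g = (LinearMap.adjoint m) ∘ₗ m := by
      apply LinearMap.ext; intro x
      apply ext_inner_right ℝ; intro v
      simp only [LinearMap.coe_comp, Function.comp_apply]
      rw [LinearMap.adjoint_inner_left, LinearMap.adjoint_inner_left]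
      exact (hinner x v).symm ▸ (hinner x v)
    have hdet : LinearMap.det ((LinearMap.adjoint g) ∘ₗ g) = (LinearMap.det m) ^ 2 := by
      rw [hadj, LinearMap.det_comp]
      have hb := LinearMap.toMatrix_adjoint (𝕜 := ℝ)
        (EuclideanSpace.basisFun (Fin p) ℝ) (EuclideanSpace.basisFun (Fin p) ℝ) m
      have : LinearMap.det (LinearMap.adjoint m) = LinearMap.det m := by
        rw [← LinearMap.det_toMatrix (EuclideanSpace.basisFun (Fin p) ℝ).toBasis
          (LinearMap.adjoint m), hb, Matrix.det_conjTranspose,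
          ← LinearMap.det_toMatrix (EuclideanSpace.basisFun (Fin p) ℝ).toBasis m]
        exact star_trivial _
      rw [this, sq]
    refine ⟨hdet ▸ sq_nonneg _, ?_⟩
    haveI : (μH[(p : ℝ)] : Measure (EuclideanSpace ℝ (Fin p))).IsAddHaarMeasure := by
      have : ((p : ℕ) : ℝ) = ((finrank ℝ (EuclideanSpace ℝ (Fin p)) : ℕ) : ℝ) := by rw [hfr]
      rw [this]
      exact isAddHaarMeasure_hausdorffMeasure
    have him : g '' T = (fun w => (W.subtypeₗᵢ) (bW.repr.symm w)) '' (m '' T) := by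
      rw [← Set.image_comp]
      exact Set.image_congr fun x _ => hgx x
    have hiso : Isometry (fun w => (W.subtypeₗᵢ) (bW.repr.symm w)) :=
      (W.subtypeₗᵢ).isometry.comp bW.repr.symm.isometry
    rw [him, hiso.hausdorffMeasure_image (Or.inl (by positivity)),
      Measure.addHaar_image_linearMap (μ := (μH[(p : ℝ)] : Measure (EuclideanSpace ℝ (Fin p)))),
      hdet, Real.sqrt_sq_eq_abs]
  · have hker : LinearMap.ker g ≠ ⊥ := fun h => hg (LinearMap.ker_eq_bot.mp h)
    have hdet : LinearMap.det ((LinearMap.adjoint g) ∘ₗ g) = 0 := by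
      by_contra hne
      obtain ⟨x, hxmem, hxne⟩ := Submodule.ne_bot_iff _ |>.mp hker
      have hinj : Function.Injective ((LinearMap.adjoint g) ∘ₗ g) :=
        (LinearMap.equivOfDetNeZero _ hne).injective
      apply hxne
      apply hinj
      simp [LinearMap.mem_ker.mp hxmem]
    refine ⟨hdet.ge, ?_⟩
    rw [hdet, Real.sqrt_zero, ENNReal.ofReal_zero, zero_mul]
    have hrange : finrank ℝ (LinearMap.range g) < p := by
      have h1 := LinearMap.finrank_range_add_finrank_ker g
      rw [hfr] at h1
      have h2 : 0 < finrank ℝ (LinearMap.ker g) := by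
        rw [finrank_pos_iff]
        exact Submodule.nontrivial_iff_ne_bot.mpr hker
      omega
    exact hausdorff_zero_of_subspace_lt _ hrange _ (by rintro y ⟨x, -, rfl⟩; exact ⟨x, rfl⟩)

end Measure

end CBProof

open CBProof

/-- for a p-dimensional subspace V of an n-dimensional real inner
product space, p ≤ q ≤ n, and a measurable S ⊆ V,
|S|_p² = (n−p choose n−q)⁻¹ · ∑_I |S_I|_p², summing over the orthogonal
projections of S onto all q-dimensional coordinate subspaces of an orthonormal
basis. -/
theorem stmt_16 {X : Type*} [NormedAddCommGroup X] [InnerProductSpace ℝ X]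
    [FiniteDimensional ℝ X] [MeasurableSpace X] [BorelSpace X]
    (n p q : ℕ) (hn : Module.finrank ℝ X = n) (hpq : p ≤ q) (hqn : q ≤ n)
    (V : Submodule ℝ X) (hV : Module.finrank ℝ V = p)
    (u : Fin n → X) (hu : Orthonormal ℝ u)
    (huspan : Submodule.span ℝ (Set.range u) = ⊤)
    (S : Set X) (hSsub : S ⊆ (V : Set X)) (hSmeas : MeasurableSet S) :
    (μH[(p : ℝ)] S) ^ 2 =
      (((n - p).choose (n - q) : ℝ≥0∞))⁻¹ *
        ∑ I ∈ Finset.univ.filter (fun I : Finset (Fin n) => I.card = q),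
          (μH[(p : ℝ)] ((fun x =>
            (Submodule.orthogonalProjectionOnto (Submodule.span ℝ (u '' I)) x : X)) '' S)) ^ 2 := by
  classical
  -- the orthonormal basis of X given by u
  let bX : OrthonormalBasis (Fin n) ℝ X := OrthonormalBasis.mk hu (ge_of_eq huspan)
  have hbX : ∀ k, bX k = u k := fun k => congrFun (OrthonormalBasis.coe_mk hu _) k
  -- isometry from Euclidean space onto V
  let bV : OrthonormalBasis (Fin p) ℝ V := (stdOrthonormalBasis ℝ V).reindex (finCongr hV)
  let φ : EuclideanSpace ℝ (Fin p) →ₗᵢ[ℝ] X :=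
    (Submodule.subtypeₗᵢ V).comp bV.repr.symm.toLinearIsometry
  have hφV : Set.range φ = (V : Set X) := by
    have h1 : Set.range ⇑φ = Set.range ((↑) : V → X) := by
      show Set.range (((↑) : V → X) ∘ ⇑bV.repr.symm.toLinearIsometry) = _
      rw [Set.range_comp, LinearIsometryEquiv.coe_toLinearIsometry,
        bV.repr.symm.surjective.range_eq, Set.image_univ]
    rw [h1, Subtype.range_coe]
  set T : Set (EuclideanSpace ℝ (Fin p)) := ⇑φ ⁻¹' S with hTdef
  have hST : ⇑φ '' T = S := by
    rw [Set.image_preimage_eq_inter_range, hφV]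
    exact Set.inter_eq_left.mpr hSsub
  set t : ℝ≥0∞ := μH[(p : ℝ)] T with htdef
  have hμS : μH[(p : ℝ)] S = t := by
    rw [← hST, φ.isometry.hausdorffMeasure_image (Or.inl (by positivity))]
  -- coordinate matrix of φ
  set e : OrthonormalBasis (Fin p) ℝ (EuclideanSpace ℝ (Fin p)) :=
    EuclideanSpace.basisFun (Fin p) ℝ with hedef
  set A : Matrix (Fin n) (Fin p) ℝ := Matrix.of fun k j => ⟪u k, φ (e j)⟫ with hAdef
  set dd : Finset (Fin n) → ℝ := fun s =>
    Matrix.det (Matrix.of fun j j' => ∑ k ∈ s, Aᵀ j k * A k j') with hdddef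
  -- measure of each projection
  have hproj : ∀ I : Finset (Fin n), I.card = q →
      0 ≤ dd I ∧
      μH[(p : ℝ)] ((fun x =>
        (Submodule.orthogonalProjectionOnto (Submodule.span ℝ (u '' ↑I)) x : X)) '' S)
        = ENNReal.ofReal (Real.sqrt (dd I)) * t := by
    intro I hI
    rw [show (u '' ↑I) = ↑(I.image u) from (Finset.coe_image).symm]
    set W : Submodule ℝ X := Submodule.span ℝ ↑(I.image u) with hWdef
    let bI : OrthonormalBasis ↥I ℝ W := OrthonormalBasis.span hu I
    set g : EuclideanSpace ℝ (Fin p) →ₗ[ℝ] X :=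
      (W.subtype ∘ₗ (Submodule.orthogonalProjectionOnto W : X →ₗ[ℝ] W)) ∘ₗ φ.toLinearMap with hgdef
    have himg : (fun x => ((Submodule.orthogonalProjectionOnto W x : X))) '' S = ⇑g '' T := by
      rw [← hST, ← Set.image_comp]
      rfl
    -- coordinates of the projection
    have hprojcoord : ∀ x : X, ((Submodule.orthogonalProjectionOnto W x : X))
        = ∑ i ∈ I.attach, ⟪u ↑i, x⟫ • u ↑i := by
      intro x
      have h1 := bI.orthogonalProjectionOnto_apply_eq_sum x
      have h2 : ((Submodule.orthogonalProjectionOnto W x : X))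
          = ∑ i : ↥I, ⟪(bI i : X), x⟫ • (bI i : X) := by
        rw [h1]
        push_cast
        rfl
      rw [h2]
      refine Finset.sum_congr rfl fun i _ => ?_
      rw [OrthonormalBasis.span_apply]
    have hNentry : ∀ k j, ⟪u k, g (e j)⟫ = if k ∈ I then A k j else 0 := by
      intro k j
      have : g (e j) = (Submodule.orthogonalProjectionOnto W (φ (e j)) : X) := rfl
      rw [this, hprojcoord]
      rw [inner_sum]
      simp only [real_inner_smul_right]
      have horth : ∀ i : ↥I, ⟪u k, u ↑i⟫ = if (k : Fin n) = ↑i then 1 else 0 := by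
        intro i
        have := orthonormal_iff_ite.mp hu k ↑i
        simpa using this
      calc ∑ i ∈ I.attach, ⟪u ↑i, φ (e j)⟫ * ⟪u k, u ↑i⟫
          = ∑ i ∈ I.attach, (if (k : Fin n) = ↑i then ⟪u ↑i, φ (e j)⟫ else 0) := by
            refine Finset.sum_congr rfl fun i _ => ?_
            rw [horth i]
            by_cases h : (k : Fin n) = ↑i <;> simp [h]
        _ = ∑ i ∈ I, (if k = i then ⟪u i, φ (e j)⟫ else 0) := by
            rw [← Finset.sum_attach I (fun i => if k = i then ⟪u i, φ (e j)⟫ else 0)]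
        _ = if k ∈ I then A k j else 0 := by
            rw [Finset.sum_ite_eq]
            simp [hAdef]
    -- determinant identity
    obtain ⟨h0, hkey⟩ := key_image g T
    have hN : LinearMap.toMatrix e.toBasis bX.toBasis g
        = Matrix.of fun k j => if k ∈ I then A k j else 0 := by
      ext k j
      rw [LinearMap.toMatrix_apply, OrthonormalBasis.coe_toBasis_repr_apply,
        OrthonormalBasis.repr_apply_apply, hbX, OrthonormalBasis.coe_toBasis]
      exact hNentry k j
    have hdet : LinearMap.det ((LinearMap.adjoint g) ∘ₗ g) = dd I := by
      rw [← LinearMap.det_toMatrix e.toBasis,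
        LinearMap.toMatrix_comp e.toBasis bX.toBasis e.toBasis,
        LinearMap.toMatrix_adjoint e bX g, hN]
      congr 1
      ext j j'
      simp only [Matrix.mul_apply, Matrix.conjTranspose_apply, Matrix.of_apply, star_trivial,
        Matrix.transpose_apply]
      calc (∑ kk : Fin n, (if kk ∈ I then A kk j else 0) * if kk ∈ I then A kk j' else 0)
          = ∑ kk : Fin n, (if kk ∈ I then A kk j * A kk j' else 0) :=
            Finset.sum_congr rfl fun kk _ => by by_cases h : kk ∈ I <;> simp [h]
        _ = ∑ kk ∈ I, A kk j * A kk j' := by rw [Finset.sum_ite_mem, Finset.univ_inter]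
    rw [himg, hkey, hdet]
    exact ⟨hdet ▸ h0, rfl⟩
  -- Parseval: dd univ = 1
  have hdduniv : dd Finset.univ = 1 := by
    have hmat : (Matrix.of fun j j' => ∑ k ∈ Finset.univ, Aᵀ j k * A k j')
        = (1 : Matrix (Fin p) (Fin p) ℝ) := by
      ext j j'
      simp only [Matrix.of_apply, Matrix.transpose_apply]
      have h1 : ∀ k, A k j * A k j' = ⟪φ (e j), bX k⟫ * ⟪bX k, φ (e j')⟫ := by
        intro k
        rw [hbX]
        simp only [hAdef, Matrix.of_apply]
        rw [real_inner_comm (u k) (φ (e j))]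
      calc ∑ k : Fin n, Aᵀ j k * A k j'
          = ∑ k : Fin n, ⟪φ (e j), bX k⟫ * ⟪bX k, φ (e j')⟫ :=
            Finset.sum_congr rfl fun k _ => by rw [Matrix.transpose_apply, h1 k]
        _ = ⟪φ (e j), φ (e j')⟫ := bX.sum_inner_mul_inner _ _
        _ = ⟪e j, e j'⟫ := φ.inner_map_map _ _
        _ = if j = j' then 1 else 0 := by
            have := orthonormal_iff_ite.mp e.orthonormal j j'
            simpa using this
        _ = (1 : Matrix (Fin p) (Fin p) ℝ) j j' := by
            rw [Matrix.one_apply]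
    rw [hdddef]
    simp only
    rw [hmat, Matrix.det_one]
  -- the square-sum function
  set sq2 : Finset (Fin n) → ℝ := fun J =>
    if h : J.card = p then (Matrix.det (A.submatrix (J.orderEmbOfFin h) id)) ^ 2 else 0
    with hsq2def
  have hddsum : ∀ s : Finset (Fin n), dd s = ∑ J ∈ s.powersetCard p, sq2 J := by
    intro s
    rw [hdddef]
    simp only
    rw [cauchyBinet Aᵀ A s]
    refine Finset.sum_congr rfl fun J hJmem => ?_
    by_cases h : J.card = p
    · rw [dif_pos h, hsq2def]
      simp only
      rw [dif_pos h]
      have : Aᵀ.submatrix id (J.orderEmbOfFin h) = (A.submatrix (J.orderEmbOfFin h) id)ᵀ := by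
        ext i j; rfl
      rw [this, Matrix.det_transpose, sq]
    · rw [dif_neg h, hsq2def]
      simp only
      rw [dif_neg h]
  have hfilter : Finset.univ.filter (fun I : Finset (Fin n) => I.card = q)
      = (Finset.univ : Finset (Fin n)).powersetCard q := by
    rw [Finset.powersetCard_eq_filter, Finset.powerset_univ]
  have hsumdd : ∑ I ∈ (Finset.univ : Finset (Fin n)).powersetCard q, dd I
      = ((n - p).choose (q - p) : ℝ) := by
    calc ∑ I ∈ (Finset.univ : Finset (Fin n)).powersetCard q, dd I
        = ∑ I ∈ (Finset.univ : Finset (Fin n)).powersetCard q,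
            ∑ J ∈ I.powersetCard p, sq2 J :=
          Finset.sum_congr rfl fun I _ => hddsum I
      _ = ∑ I ∈ (Finset.univ : Finset (Fin n)).powersetCard q,
            ∑ J ∈ (Finset.univ : Finset (Fin n)).powersetCard p,
            if J ⊆ I then sq2 J else 0 := by
          refine Finset.sum_congr rfl fun I _ => ?_
          rw [← Finset.sum_filter]
          congr 1
          ext J
          simp only [Finset.mem_powersetCard, Finset.mem_filter, Finset.subset_univ, true_and]
          tauto
      _ = ∑ J ∈ (Finset.univ : Finset (Fin n)).powersetCard p,
            ∑ I ∈ (Finset.univ : Finset (Fin n)).powersetCard q,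
            if J ⊆ I then sq2 J else 0 := Finset.sum_comm
      _ = ∑ J ∈ (Finset.univ : Finset (Fin n)).powersetCard p,
            ((n - p).choose (q - p) : ℝ) * sq2 J := by
          refine Finset.sum_congr rfl fun J hJ => ?_
          rw [← Finset.sum_filter, Finset.sum_const,
            count_supersets J (Finset.mem_powersetCard.mp hJ).2 hpq, nsmul_eq_mul]
      _ = ((n - p).choose (q - p) : ℝ) *
            ∑ J ∈ (Finset.univ : Finset (Fin n)).powersetCard p, sq2 J := by
          rw [Finset.mul_sum]
      _ = ((n - p).choose (q - p) : ℝ) := by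
          rw [← hddsum Finset.univ, hdduniv, mul_one]
  -- final ENNReal computation
  rw [hμS, hfilter]
  have hterm : ∀ I ∈ (Finset.univ : Finset (Fin n)).powersetCard q,
      (μH[(p : ℝ)] ((fun x =>
        (Submodule.orthogonalProjectionOnto (Submodule.span ℝ (u '' ↑I)) x : X)) '' S)) ^ 2
      = ENNReal.ofReal (dd I) * t ^ 2 := by
    intro I hImem
    have hI : I.card = q := (Finset.mem_powersetCard.mp hImem).2
    obtain ⟨h0, hmeas⟩ := hproj I hI
    rw [hmeas, mul_pow, ← ENNReal.ofReal_pow (Real.sqrt_nonneg _), Real.sq_sqrt h0]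
  rw [Finset.sum_congr rfl hterm, ← Finset.sum_mul, ← ENNReal.ofReal_sum_of_nonneg
    (fun I hImem => (hproj I (Finset.mem_powersetCard.mp hImem).2).1), hsumdd,
    ENNReal.ofReal_natCast]
  have hchoose : (n - p).choose (n - q) = (n - p).choose (q - p) := by
    have h1 : n - q = (n - p) - (q - p) := by omega
    rw [h1, Nat.choose_symm (by omega)]
  rw [hchoose, ← mul_assoc, ENNReal.inv_mul_cancel
    (by exact_mod_cast (Nat.choose_pos (by omega : q - p ≤ n - p)).ne')
    (ENNReal.natCast_ne_top _), one_mul]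
end
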